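/- arXiv:1209.4375 — 4 statements merged into one kernel-verified Lean document; each statement's English description precedes it below -/
import Mathlib

section
/- Let E be a connected directed graph, K a field, and I an ideal of the path algebra K\hat{E} of the extended graph such that I contains no edge of E (I ∩ E^1 = ∅). Let A = K\hat{E}/I and let p : K\hat{E} → A be the canonical projection. If E^0 is finite then the intersection of the linear span of p(E^0) with the center Z(A) equals K·1; if E^0 is infinite then this intersection is 0. In particular, for A the Cohn path algebra C_K(E) or the Leavitt path algebra L_K(E) of a connected graph E, span(E^0) ∩ Z(A) = K·1 if E^0 is finite and 0 otherwise. -/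
/-! Basic infrastructure: directed graphs and their path algebras.

The path algebra `KE` is realized as the non-unital subalgebra generated by the
(images of the) vertices and edges inside the unital algebra `PA K E`, which is the
quotient of the free algebra on vertices and edges by the usual path-algebra
relations (vertices are orthogonal idempotents acting as local units on edges).
Words of composable edges are exactly the paths, so `KE` has the paths as a basis. -/

/-- A directed graph `E = (E⁰, E¹, s, r)`. -/
structure DirGraph : Type 1 where
  V : Type
  Edge : Type
  s : Edge → V
  r : Edge → V

/-- A (non-unital, possibly non-closed) subset `S` of an algebra is *prime* if it is nonzero
and `a S b = 0` implies `a = 0` or `b = 0` for `a, b ∈ S`. -/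
def IsPrimeSet {A : Type} [NonUnitalNonAssocSemiring A] (S : Set A) : Prop :=
  (∃ a ∈ S, a ≠ 0) ∧ ∀ a ∈ S, ∀ b ∈ S, (∀ x ∈ S, a * x * b = 0) → a = 0 ∨ b = 0

/-- `J` is a two-sided ideal of the (possibly non-unital) subalgebra with carrier `S`. -/
def IsIdealOf (K : Type) [Field K] {A : Type} [Ring A] [Algebra K A] (S J : Set A) : Prop :=
  J ⊆ S ∧ (0 : A) ∈ J ∧ (∀ x ∈ J, ∀ y ∈ J, x + y ∈ J) ∧
    (∀ k : K, ∀ x ∈ J, k • x ∈ J) ∧ (∀ a ∈ S, ∀ x ∈ J, a * x ∈ J ∧ x * a ∈ J)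

namespace DirGraph

/-- Generators of the path algebra: vertices and edges. -/
abbrev Gen (E : DirGraph) : Type := E.V ⊕ E.Edge

variable (K : Type) [Field K] (E : DirGraph)

/-- The defining relations of the path algebra: vertices are orthogonal idempotents,
`s(e)·e = e`, `e·r(e) = e`, and all other vertex-edge products vanish. -/
inductive PathRel : FreeAlgebra K E.Gen → FreeAlgebra K E.Gen → Prop
  | vv_eq (u : E.V) :
      PathRel (FreeAlgebra.ι K (Sum.inl u) * FreeAlgebra.ι K (Sum.inl u))
        (FreeAlgebra.ι K (Sum.inl u))
  | vv_ne (u v : E.V) : u ≠ v →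
      PathRel (FreeAlgebra.ι K (Sum.inl u) * FreeAlgebra.ι K (Sum.inl v)) 0
  | ve_eq (e : E.Edge) :
      PathRel (FreeAlgebra.ι K (Sum.inl (E.s e)) * FreeAlgebra.ι K (Sum.inr e))
        (FreeAlgebra.ι K (Sum.inr e))
  | ve_ne (u : E.V) (e : E.Edge) : E.s e ≠ u →
      PathRel (FreeAlgebra.ι K (Sum.inl u) * FreeAlgebra.ι K (Sum.inr e)) 0
  | ev_eq (e : E.Edge) :
      PathRel (FreeAlgebra.ι K (Sum.inr e) * FreeAlgebra.ι K (Sum.inl (E.r e)))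
        (FreeAlgebra.ι K (Sum.inr e))
  | ev_ne (e : E.Edge) (u : E.V) : E.r e ≠ u →
      PathRel (FreeAlgebra.ι K (Sum.inr e) * FreeAlgebra.ι K (Sum.inl u)) 0

/-- The ambient unital algebra (the unitalization of the path algebra). -/
abbrev PA : Type := RingQuot (E.PathRel K)

/-- The image of a vertex in the path algebra. -/
noncomputable def vtx (u : E.V) : E.PA K :=
  RingQuot.mkAlgHom K (E.PathRel K) (FreeAlgebra.ι K (Sum.inl u))

/-- The image of an edge in the path algebra. -/
noncomputable def edg (e : E.Edge) : E.PA K :=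
  RingQuot.mkAlgHom K (E.PathRel K) (FreeAlgebra.ι K (Sum.inr e))

/-- The path algebra `KE`: the (non-unital) subalgebra spanned by all paths, i.e.
generated by the vertices and edges. -/
noncomputable def KE : NonUnitalSubalgebra K (E.PA K) :=
  NonUnitalAlgebra.adjoin K (Set.range (E.vtx K) ∪ Set.range (E.edg K))

/-- The center `Z(KE)` of the path algebra. -/
def relCenter : Set (E.PA K) :=
  {z | z ∈ E.KE K ∧ ∀ a ∈ E.KE K, a * z = z * a}

/-- `E.IsPathFrom u v l` : the list of edges `l` is a path from `u` to `v`
(`l = []` is the trivial path at `u = v`). -/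
def IsPathFrom : E.V → E.V → List E.Edge → Prop
  | u, v, [] => u = v
  | u, v, e :: l => E.s e = u ∧ IsPathFrom (E.r e) v l

/-- The element of the path algebra corresponding to the path starting at `u`
with list of edges `l` (for `l = []` this is the vertex `u` itself). -/
noncomputable def pathElem (u : E.V) (l : List E.Edge) : E.PA K :=
  E.vtx K u * (l.map (E.edg K)).prod

/-- The sum of all vertices: the unit of `KE` when `E⁰` is finite. -/
noncomputable def unitKE : E.PA K := ∑ᶠ u : E.V, E.vtx K u

/-- The scalar multiples `K·1` of the unit of `KE`. -/
noncomputable def scalarSet : Set (E.PA K) := Set.range fun k : K => k • E.unitKE K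

/-- One step in the underlying undirected graph. -/
def Step (u v : E.V) : Prop :=
  (∃ e : E.Edge, E.s e = u ∧ E.r e = v) ∨ (∃ e : E.Edge, E.s e = v ∧ E.r e = u)

/-- `u ∼ v` : the vertices `u` and `v` are connected in the underlying undirected graph. -/
def Connected (u v : E.V) : Prop := Relation.ReflTransGen E.Step u v

/-- The graph `E` is connected. -/
def IsConnectedGraph : Prop := ∀ u v : E.V, E.Connected u v

/-- The graph `E` is a cycle: `n ≥ 1` vertices `u₁, …, uₙ` and `n` edges `f₁, …, fₙ` with
`s(fᵢ) = uᵢ`, `r(fᵢ) = uᵢ₊₁` (indices mod `n`). -/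
def IsCycleGraph : Prop :=
  ∃ n : ℕ, ∃ hn : 0 < n, ∃ (hv : Fin n ≃ E.V) (he : Fin n ≃ E.Edge),
    ∀ i : Fin n, E.s (he i) = hv i ∧ E.r (he i) = hv ⟨(i.1 + 1) % n, Nat.mod_lt _ hn⟩

end DirGraph

namespace DirGraph

/-- The extended graph `Ê`: same vertices, edges `E¹ ⊕ (E¹)*`, where the ghost edge `e*`
(second component) has `s(e*) = r(e)` and `r(e*) = s(e)`. -/
def ext (E : DirGraph) : DirGraph where
  V := E.V
  Edge := E.Edge ⊕ E.Edge
  s := Sum.elim E.s E.r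
  r := Sum.elim E.r E.s

variable (K : Type) [Field K] (E : DirGraph)

/-- Defining relations of the Cohn (`t = false`) and Leavitt (`t = true`) path algebras:
the path-algebra relations of the extended graph, the relations (CK1)
`e*e' = δ_{e,e'} r(e)`, and — only for `t = true` — the relations (CK2)
`v = Σ_{s(e)=v} ee*` at every regular vertex `v`. -/
inductive CLRel : Bool → FreeAlgebra K E.ext.Gen → FreeAlgebra K E.ext.Gen → Prop
  | base (t : Bool) {a b : FreeAlgebra K E.ext.Gen} : E.ext.PathRel K a b → CLRel t a b
  | ck1_eq (t : Bool) (e : E.Edge) :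
      CLRel t (FreeAlgebra.ι K (Sum.inr (Sum.inr e)) * FreeAlgebra.ι K (Sum.inr (Sum.inl e)))
        (FreeAlgebra.ι K (Sum.inl (E.r e)))
  | ck1_ne (t : Bool) (e f : E.Edge) : e ≠ f →
      CLRel t (FreeAlgebra.ι K (Sum.inr (Sum.inr e)) * FreeAlgebra.ι K (Sum.inr (Sum.inl f))) 0
  | ck2 (v : E.V) (h : {e : E.Edge | E.s e = v}.Finite)
      (hne : {e : E.Edge | E.s e = v}.Nonempty) :
      CLRel true (FreeAlgebra.ι K (Sum.inl v))
        (h.toFinset.sum fun e =>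
          FreeAlgebra.ι K (Sum.inr (Sum.inl e)) * FreeAlgebra.ι K (Sum.inr (Sum.inr e)))

/-- The ambient unital algebra containing the Cohn (`t = false`) or
Leavitt (`t = true`) path algebra. -/
abbrev CL (t : Bool) : Type := RingQuot (E.CLRel K t)

/-- The image of a vertex in `C_K(E)` / `L_K(E)`. -/
noncomputable def clvtx (t : Bool) (u : E.V) : E.CL K t :=
  RingQuot.mkAlgHom K (E.CLRel K t) (FreeAlgebra.ι K (Sum.inl u))

/-- The image of a (real) edge in `C_K(E)` / `L_K(E)`. -/
noncomputable def cledg (t : Bool) (e : E.Edge) : E.CL K t :=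
  RingQuot.mkAlgHom K (E.CLRel K t) (FreeAlgebra.ι K (Sum.inr (Sum.inl e)))

/-- The image of a ghost edge `e*` in `C_K(E)` / `L_K(E)`. -/
noncomputable def clghost (t : Bool) (e : E.Edge) : E.CL K t :=
  RingQuot.mkAlgHom K (E.CLRel K t) (FreeAlgebra.ι K (Sum.inr (Sum.inr e)))

/-- The Cohn path algebra `C_K(E)` (`t = false`) or Leavitt path algebra `L_K(E)`
(`t = true`): the non-unital subalgebra generated by vertices, edges, and ghost edges. -/
noncomputable def clSub (t : Bool) : NonUnitalSubalgebra K (E.CL K t) :=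
  NonUnitalAlgebra.adjoin K
    (Set.range (E.clvtx K t) ∪ Set.range (E.cledg K t) ∪ Set.range (E.clghost K t))

/-- The center of `C_K(E)` (`t = false`) or of `L_K(E)` (`t = true`). -/
def clCenter (t : Bool) : Set (E.CL K t) :=
  {z | z ∈ E.clSub K t ∧ ∀ a ∈ E.clSub K t, a * z = z * a}

/-- The element `μ` of `C_K(E)` / `L_K(E)` for the path `μ` starting at `u` with edges `l`. -/
noncomputable def clPath (t : Bool) (u : E.V) (l : List E.Edge) : E.CL K t :=
  E.clvtx K t u * (l.map (E.cledg K t)).prod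

/-- The element `μ*` of `C_K(E)` / `L_K(E)` for the path `μ` starting at `u` with edges `l`. -/
noncomputable def clPathStar (t : Bool) (u : E.V) (l : List E.Edge) : E.CL K t :=
  ((l.map (E.clghost K t)).reverse).prod * E.clvtx K t u

/-- The sum of all vertices: the unit of `C_K(E)` / `L_K(E)` when `E⁰` is finite. -/
noncomputable def clOne (t : Bool) : E.CL K t := ∑ᶠ u : E.V, E.clvtx K t u

/-- The degree-zero component (w.r.t. the canonical ℤ-grading) of `C_K(E)` / `L_K(E)`:
the span of the elements `στ*` with `σ, τ` paths of equal length and common range. -/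
def clDeg0 (t : Bool) : Submodule K (E.CL K t) :=
  Submodule.span K {x : E.CL K t | ∃ (u w v : E.V) (l m : List E.Edge),
    E.IsPathFrom u v l ∧ E.IsPathFrom w v m ∧ l.length = m.length ∧
    x = E.clPath K t u l * E.clPathStar K t w m}

/-- The span of the symmetric elements `μμ*`, `μ` a path of `E`. -/
def clSymmSpan (t : Bool) : Submodule K (E.CL K t) :=
  Submodule.span K {x : E.CL K t | ∃ (u v : E.V) (l : List E.Edge),
    E.IsPathFrom u v l ∧ x = E.clPath K t u l * E.clPathStar K t u l}

/-- A subset `H ⊆ E⁰` is hereditary if paths starting in `H` end in `H`. -/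
def Hereditary (H : Set E.V) : Prop :=
  ∀ (u v : E.V) (l : List E.Edge), E.IsPathFrom u v l → u ∈ H → v ∈ H

/-- The two-sided ideal of `C_K(E)` / `L_K(E)` generated by a subset `S₀`. -/
def clIdealGen (t : Bool) (S₀ : Set (E.CL K t)) : Set (E.CL K t) :=
  ⋂₀ {J : Set (E.CL K t) | IsIdealOf K (E.clSub K t : Set (E.CL K t)) J ∧ S₀ ⊆ J}

/-- `c` is a cycle based at `u`: a nontrivial closed path visiting no vertex twice. -/
def IsCycle (u : E.V) (l : List E.Edge) : Prop :=
  l ≠ [] ∧ E.IsPathFrom u u l ∧ (l.map E.s).Nodup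

/-- The (closed) path `l` has an exit. -/
def HasExit (l : List E.Edge) : Prop :=
  ∃ f : E.Edge, ∃ e ∈ l, E.s f = E.s e ∧ f ≠ e

/-- Condition (L): every cycle of `E` has an exit. -/
def CondL : Prop := ∀ (u : E.V) (l : List E.Edge), E.IsCycle u l → E.HasExit l

/-- The set of paths (given by their source and list of edges) that end at a vertex of the
cycle `c` and do not contain all the edges of `c`. -/
def endsAtNotContaining (c : List E.Edge) : Set (E.V × List E.Edge) :=
  {p | (∃ v : E.V, (∃ e ∈ c, E.s e = v) ∧ E.IsPathFrom p.1 v p.2) ∧ ∃ e ∈ c, e ∉ p.2}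

/-- `c` is the unique cycle of `E` without exits (uniqueness as a cycle: any cycle
without exits has the same edges as `c`). -/
def UniqueNoExitCycle (c : List E.Edge) : Prop :=
  (∃ u : E.V, E.IsCycle u c ∧ ¬ E.HasExit c) ∧
    ∀ (u' : E.V) (c' : List E.Edge), E.IsCycle u' c' → ¬ E.HasExit c' →
      ∀ e : E.Edge, e ∈ c' ↔ e ∈ c

end DirGraph

/-! If `z = ∑ c_u u` lies in the span of the vertices, then for every edge `e` the commutator
`e z - z e` equals `(c_{r(e)} - c_{s(e)}) e`. So if `z` is central modulo an ideal that contains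
no nonzero multiple of an edge, then `c` takes the same value at both ends of every edge. Since
`E` is connected, `c` is constant. If `E⁰` is finite, `z` is then a scalar multiple of `∑ u`, the
unit. If `E⁰` is infinite, a finitely supported constant function is `0`.

For `C_K(E)` and `L_K(E)` we still have to show that no edge vanishes. Both algebras act on
functions on maximal paths (paths that are infinite or end at a sink). A vertex `v` acts by
restricting to paths that start at `v`, an edge `e` by removing a leading `e`, and a ghost edge
`e*` by prepending `e`. Relation (CK2) holds because a path starting at a regular vertex has a
first edge. -/

section Arrows

variable {K A V : Type*} [Field K] [Ring A] [Algebra K A] [DecidableEq V]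

def IsArrowBetween (p : V → A) (a b : V) (x : A) : Prop :=
  (∀ u, p u * x = if u = a then x else 0) ∧ ∀ u, x * p u = if u = b then x else 0

variable {p : V → A} {a b : V} {x : A}

theorem IsArrowBetween.commutator_finsuppSum (hx : IsArrowBetween p a b x) (c : V →₀ K) :
    x * c.sum (fun u k => k • p u) - c.sum (fun u k => k • p u) * x = (c b - c a) • x := by
  simp only [Finsupp.mul_sum, Finsupp.sum_mul, mul_smul_comm, smul_mul_assoc, hx.1, hx.2,
    smul_ite, smul_zero, Finsupp.sum_ite_eq', sub_smul]
  split_ifs <;> simp_all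

theorem IsArrowBetween.coeff_eq_of_commutator_mem (hx : IsArrowBetween p a b x) {I : Set A}
    (hI : ∀ k : K, ∀ y ∈ I, k • y ∈ I) (hxI : x ∉ I) (c : V →₀ K)
    (hc : x * c.sum (fun u k => k • p u) - c.sum (fun u k => k • p u) * x ∈ I) :
    c a = c b := by
  rw [hx.commutator_finsuppSum] at hc
  by_contra hab
  have hba : c b - c a ≠ 0 := sub_ne_zero.2 (Ne.symm hab)
  refine hxI ?_
  simpa [smul_smul, inv_mul_cancel₀ hba] using hI (c b - c a)⁻¹ _ hc

theorem IsArrowBetween.finsum_mul (hx : IsArrowBetween p a b x)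
    (hp : (Function.support p).Finite) : (∑ᶠ u, p u) * x = x := by
  rw [finsum_eq_sum _ hp, Finset.sum_mul]
  simp only [hx.1, Finset.sum_ite_eq']
  split_ifs with hpa
  · rfl
  · have : p a = 0 := Function.notMem_support.1 fun h => hpa (hp.mem_toFinset.2 h)
    simpa [this, eq_comm] using hx.1 a

theorem IsArrowBetween.mul_finsum (hx : IsArrowBetween p a b x)
    (hp : (Function.support p).Finite) : x * ∑ᶠ u, p u = x := by
  rw [finsum_eq_sum _ hp, Finset.mul_sum]
  simp only [hx.2, Finset.sum_ite_eq']
  split_ifs with hpb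
  · rfl
  · have : p b = 0 := Function.notMem_support.1 fun h => hpb (hp.mem_toFinset.2 h)
    simpa [this, eq_comm] using hx.2 b

/-- No finiteness is assumed: for infinite support, `∑ᶠ u, p u` is the junk value `0`. -/
theorem commute_finsum_of_mem_adjoin {G : Set A} (hG : ∀ g ∈ G, ∃ a b, IsArrowBetween p a b g)
    {y : A} (hy : y ∈ NonUnitalAlgebra.adjoin K G) : Commute y (∑ᶠ u, p u) := by
  by_cases hp : (Function.support p).Finite
  · suffices y * (∑ᶠ u, p u) = y ∧ (∑ᶠ u, p u) * y = y from this.1.trans this.2.symm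
    induction hy using NonUnitalAlgebra.adjoin_induction with
    | mem g hg =>
      obtain ⟨a, b, hg⟩ := hG g hg
      exact ⟨hg.mul_finsum hp, hg.finsum_mul hp⟩
    | add y z _ _ hy hz => exact ⟨by rw [add_mul, hy.1, hz.1], by rw [mul_add, hy.2, hz.2]⟩
    | zero => exact ⟨zero_mul _, mul_zero _⟩
    | mul y z _ _ hy hz => exact ⟨by rw [mul_assoc, hz.1], by rw [← mul_assoc, hy.2]⟩
    | smul k y _ hy => exact ⟨by rw [smul_mul_assoc, hy.1], by rw [mul_smul_comm, hy.2]⟩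
  · rw [finsum_of_infinite_support hp]
    exact Commute.zero_right y

omit [DecidableEq V] in
theorem finsum_mem_span_range (p : V → A) : ∑ᶠ u, p u ∈ Submodule.span K (Set.range p) :=
  finsum_induction _ (zero_mem _) (fun _ _ => add_mem) fun u => Submodule.subset_span ⟨u, rfl⟩

end Arrows

section PartialPullback

variable (K : Type*) [Field K] {X : Type*}

def partialPullback (g : X → Option X) : Module.End K (X → K) where
  toFun f x := (g x).elim 0 f
  map_add' f f' := by ext x; dsimp only [Pi.add_apply]; cases g x <;> simp
  map_smul' k f := by ext x; dsimp only [Pi.smul_apply]; cases g x <;> simp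

variable {K}

@[simp]
theorem partialPullback_apply (g : X → Option X) (f : X → K) (x : X) :
    partialPullback K g f x = (g x).elim 0 f := rfl

theorem partialPullback_mul (g h : X → Option X) :
    partialPullback K g * partialPullback K h = partialPullback K fun x => (g x).bind h := by
  ext f x
  simp only [Module.End.mul_apply, partialPullback_apply]
  cases g x <;> rfl

theorem partialPullback_none : partialPullback K (fun _ : X => none) = 0 := rfl

end PartialPullback

namespace DirGraph

section

variable {E : DirGraph}

theorem IsConnectedGraph.eq_of_forall_edge {α : Type*} (hconn : E.IsConnectedGraph)
    {c : E.V → α} (hc : ∀ e, c (E.s e) = c (E.r e)) (u v : E.V) : c u = c v := by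
  induction hconn u v with
  | refl => rfl
  | tail _ h ih =>
    rcases h with ⟨e, rfl, rfl⟩ | ⟨e, rfl, rfl⟩
    · exact ih.trans (hc e)
    · exact ih.trans (hc e).symm

section Span

variable {K A : Type*} [Field K] [Ring A] [Algebra K A] [DecidableEq E.V]
  {p : E.V → A} {x : E.Edge → A} {I : Set A} {z : A}

theorem exists_eq_smul_finsum_of_commutator_mem [Finite E.V] (hconn : E.IsConnectedGraph)
    (hx : ∀ e, IsArrowBetween p (E.s e) (E.r e) (x e)) (hI : ∀ k : K, ∀ y ∈ I, k • y ∈ I)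
    (hxI : ∀ e, x e ∉ I) (hz : z ∈ Submodule.span K (Set.range p))
    (hzI : ∀ e, x e * z - z * x e ∈ I) : ∃ k : K, z = k • ∑ᶠ u, p u := by
  obtain ⟨c, rfl⟩ := Finsupp.mem_span_range_iff_exists_finsupp.1 hz
  have hc := hconn.eq_of_forall_edge fun e =>
    (hx e).coeff_eq_of_commutator_mem hI (hxI e) c (hzI e)
  have := Fintype.ofFinite E.V
  rcases isEmpty_or_nonempty E.V with hV | ⟨⟨v⟩⟩
  · exact ⟨0, by simp [Subsingleton.elim c 0]⟩
  · refine ⟨c v, ?_⟩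
    rw [Finsupp.sum_fintype _ _ fun u => zero_smul K (p u), finsum_eq_sum_of_fintype,
      Finset.smul_sum]
    exact Finset.sum_congr rfl fun u _ => by rw [hc u v]

theorem eq_zero_of_commutator_mem [Infinite E.V] (hconn : E.IsConnectedGraph)
    (hx : ∀ e, IsArrowBetween p (E.s e) (E.r e) (x e)) (hI : ∀ k : K, ∀ y ∈ I, k • y ∈ I)
    (hxI : ∀ e, x e ∉ I) (hz : z ∈ Submodule.span K (Set.range p))
    (hzI : ∀ e, x e * z - z * x e ∈ I) : z = 0 := by
  obtain ⟨c, rfl⟩ := Finsupp.mem_span_range_iff_exists_finsupp.1 hz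
  have hc := hconn.eq_of_forall_edge fun e =>
    (hx e).coeff_eq_of_commutator_mem hI (hxI e) c (hzI e)
  obtain ⟨v, hv⟩ := Infinite.exists_notMem_finset c.support
  have : c = 0 := Finsupp.ext fun u => (hc u v).trans (Finsupp.notMem_support_iff.1 hv)
  simp [this]

end Span

section PathRelations

variable {K : Type} {A : Type*} [Field K] [Ring A] [Algebra K A] [DecidableEq E.V]
  (φ : FreeAlgebra K E.Gen →ₐ[K] A)

theorem isArrowBetween_vertex (hφ : ∀ ⦃a b⦄, E.PathRel K a b → φ a = φ b) (u : E.V) :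
    IsArrowBetween (fun v => φ (FreeAlgebra.ι K (Sum.inl v))) u u
      (φ (FreeAlgebra.ι K (Sum.inl u))) := by
  refine ⟨fun v => ?_, fun v => ?_⟩ <;> split_ifs with h <;> rw [← map_mul]
  · rw [h, hφ (.vv_eq u)]
  · rw [hφ (.vv_ne v u h), map_zero]
  · rw [h, hφ (.vv_eq u)]
  · rw [hφ (.vv_ne u v (Ne.symm h)), map_zero]

theorem isArrowBetween_edge (hφ : ∀ ⦃a b⦄, E.PathRel K a b → φ a = φ b) (e : E.Edge) :
    IsArrowBetween (fun v => φ (FreeAlgebra.ι K (Sum.inl v))) (E.s e) (E.r e)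
      (φ (FreeAlgebra.ι K (Sum.inr e))) := by
  refine ⟨fun v => ?_, fun v => ?_⟩ <;> split_ifs with h <;> rw [← map_mul]
  · rw [h, hφ (.ve_eq e)]
  · rw [hφ (.ve_ne v e (Ne.symm h)), map_zero]
  · rw [h, hφ (.ev_eq e)]
  · rw [hφ (.ev_ne e v (Ne.symm h)), map_zero]

theorem pathRel_of_isArrowBetween
    (hv : ∀ u, IsArrowBetween (fun v => φ (FreeAlgebra.ι K (Sum.inl v))) u u
      (φ (FreeAlgebra.ι K (Sum.inl u))))
    (he : ∀ e, IsArrowBetween (fun v => φ (FreeAlgebra.ι K (Sum.inl v))) (E.s e) (E.r e)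
      (φ (FreeAlgebra.ι K (Sum.inr e))))
    ⦃a b : FreeAlgebra K E.Gen⦄ (h : E.PathRel K a b) : φ a = φ b := by
  cases h with
  | vv_eq u => simpa using (hv u).1 u
  | vv_ne u v h => simpa [h] using (hv v).1 u
  | ve_eq e => simpa using (he e).1 (E.s e)
  | ve_ne u e h => simpa [Ne.symm h] using (he e).1 u
  | ev_eq e => simpa using (he e).2 (E.r e)
  | ev_ne e u h => simpa [Ne.symm h] using (he e).2 u

end PathRelations

/-- A path of `E` that is infinite or stops at a sink; once `edge n = none` the path has
stopped, and the later entries carry no information. -/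
@[ext]
structure MaxPath (E : DirGraph) where
  vert : ℕ → E.V
  edge : ℕ → Option E.Edge
  edge_eq_some : ∀ n e, edge n = some e → E.s e = vert n ∧ E.r e = vert (n + 1)
  edge_eq_none : ∀ n, edge n = none → ∀ e, E.s e ≠ vert n

open Classical in
noncomputable def nextEdge (E : DirGraph) (v : E.V) : Option E.Edge :=
  if h : ∃ e, E.s e = v then some h.choose else none

theorem nextEdge_eq_some {v : E.V} {e : E.Edge} (h : E.nextEdge v = some e) : E.s e = v := by
  unfold nextEdge at h
  split_ifs at h with hv
  exact Option.some_injective _ h ▸ hv.choose_spec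

theorem nextEdge_eq_none {v : E.V} (h : E.nextEdge v = none) (e : E.Edge) : E.s e ≠ v := by
  unfold nextEdge at h
  split_ifs at h with hv
  exact fun he => hv ⟨e, he⟩

noncomputable def walk (E : DirGraph) (v : E.V) : ℕ → E.V
  | 0 => v
  | n + 1 => ((E.nextEdge (E.walk v n)).map E.r).getD (E.walk v n)

namespace MaxPath

def tail (p : E.MaxPath) : E.MaxPath where
  vert n := p.vert (n + 1)
  edge n := p.edge (n + 1)
  edge_eq_some n := p.edge_eq_some (n + 1)
  edge_eq_none n := p.edge_eq_none (n + 1)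

def cons (e : E.Edge) (p : E.MaxPath) (h : E.r e = p.vert 0) : E.MaxPath where
  vert
    | 0 => E.s e
    | n + 1 => p.vert n
  edge
    | 0 => some e
    | n + 1 => p.edge n
  edge_eq_some
    | 0, _, rfl => ⟨rfl, h⟩
    | n + 1, e', h' => p.edge_eq_some n e' h'
  edge_eq_none
    | 0, h' => absurd h' (Option.some_ne_none e)
    | n + 1, h' => p.edge_eq_none n h'

@[simp]
theorem tail_vert (p : E.MaxPath) (n : ℕ) : p.tail.vert n = p.vert (n + 1) := rfl

@[simp]
theorem cons_edge_zero (e : E.Edge) (p : E.MaxPath) (h : E.r e = p.vert 0) :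
    (p.cons e h).edge 0 = some e := rfl

@[simp]
theorem tail_cons (e : E.Edge) (p : E.MaxPath) (h : E.r e = p.vert 0) :
    (p.cons e h).tail = p := rfl

theorem cons_tail {p : E.MaxPath} {e : E.Edge} (h : p.edge 0 = some e) :
    p.tail.cons e (p.edge_eq_some 0 e h).2 = p := by
  ext n : 2
  · cases n
    exacts [(p.edge_eq_some 0 e h).1, rfl]
  · cases n
    exacts [h.symm, rfl]

noncomputable def ofVertex (v : E.V) : E.MaxPath where
  vert := E.walk v
  edge n := E.nextEdge (E.walk v n)
  edge_eq_some n e h := ⟨nextEdge_eq_some h, by simp [walk, h]⟩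
  edge_eq_none n h := nextEdge_eq_none h

theorem ofVertex_vert_zero (v : E.V) : (ofVertex v).vert 0 = v := rfl

open Classical in
noncomputable def startingAt (u : E.V) (p : E.MaxPath) : Option E.MaxPath :=
  if p.vert 0 = u then some p else none

open Classical in
noncomputable def dropEdge (e : E.Edge) (p : E.MaxPath) : Option E.MaxPath :=
  if p.edge 0 = some e then some p.tail else none

open Classical in
noncomputable def prependEdge (e : E.Edge) (p : E.MaxPath) : Option E.MaxPath :=
  if h : E.r e = p.vert 0 then some (p.cons e h) else none

def IsPartialArrow (a b : E.V) (g : E.MaxPath → Option E.MaxPath) : Prop :=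
  ∀ p q, g p = some q → p.vert 0 = a ∧ q.vert 0 = b

theorem isPartialArrow_startingAt (u : E.V) : IsPartialArrow u u (startingAt u) := by
  intro p q h
  unfold startingAt at h
  split_ifs at h with hp
  cases h
  exact ⟨hp, hp⟩

theorem isPartialArrow_dropEdge (e : E.Edge) :
    IsPartialArrow (E.s e) (E.r e) (dropEdge e) := by
  intro p q h
  simp only [dropEdge, Option.ite_none_right_eq_some, Option.some.injEq] at h
  obtain ⟨he, rfl⟩ := h
  exact ⟨(p.edge_eq_some 0 e he).1.symm, (p.edge_eq_some 0 e he).2.symm⟩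

theorem isPartialArrow_prependEdge (e : E.Edge) :
    IsPartialArrow (E.r e) (E.s e) (prependEdge e) := by
  intro p q h
  simp only [prependEdge, Option.dite_none_right_eq_some, Option.some.injEq] at h
  obtain ⟨he, rfl⟩ := h
  exact ⟨he.symm, rfl⟩

section IsPartialArrow

variable [DecidableEq E.V] {a b : E.V} {g : E.MaxPath → Option E.MaxPath}

theorem startingAt_bind (hg : IsPartialArrow a b g) (u : E.V) :
    (fun p => (startingAt u p).bind g) = if u = a then g else fun _ => none := by
  funext p
  rcases hgp : g p with _ | q
  · split_ifs <;> simp [startingAt, hgp]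
  · have hpa := (hg p q hgp).1
    split_ifs with hu
    · simp [startingAt, hgp, hpa, hu]
    · simp [startingAt, hpa, Ne.symm hu]

theorem bind_startingAt (hg : IsPartialArrow a b g) (u : E.V) :
    (fun p => (g p).bind (startingAt u)) = if u = b then g else fun _ => none := by
  funext p
  rcases hgp : g p with _ | q
  · split_ifs <;> simp [hgp]
  · have hqb := (hg p q hgp).2
    split_ifs with hu
    · simp [startingAt, hgp, hqb, hu]
    · simp [startingAt, hqb, Ne.symm hu]

theorem isArrowBetween_partialPullback (K : Type*) [Field K] (hg : IsPartialArrow a b g) :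
    IsArrowBetween (fun u => partialPullback K (startingAt u)) a b (partialPullback K g) :=
  ⟨fun u => by
    rw [partialPullback_mul, startingAt_bind hg, apply_ite (partialPullback K),
      partialPullback_none],
  fun u => by
    rw [partialPullback_mul, bind_startingAt hg, apply_ite (partialPullback K),
      partialPullback_none]⟩

end IsPartialArrow

theorem dropEdge_cons (e : E.Edge) (p : E.MaxPath) (h : E.r e = p.vert 0) :
    dropEdge e (p.cons e h) = some p :=
  if_pos rfl

theorem prependEdge_bind_dropEdge (e : E.Edge) :
    (fun p => (prependEdge e p).bind (dropEdge e)) = startingAt (E.r e) := by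
  funext p
  by_cases h : E.r e = p.vert 0
  · simp [prependEdge, dropEdge, startingAt, h]
  · simp [prependEdge, startingAt, h, Ne.symm h]

theorem prependEdge_bind_dropEdge_of_ne {e f : E.Edge} (hef : e ≠ f) :
    (fun p => (prependEdge e p).bind (dropEdge f)) = fun _ => none := by
  funext p
  by_cases h : E.r e = p.vert 0 <;> simp [prependEdge, dropEdge, h, hef]

open Classical in
theorem dropEdge_bind_prependEdge (e : E.Edge) :
    (fun p => (dropEdge e p).bind (prependEdge e)) =
      fun p => if p.edge 0 = some e then some p else none := by
  funext p
  by_cases h : p.edge 0 = some e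
  · simp [dropEdge, prependEdge, h, (p.edge_eq_some 0 e h).2, cons_tail h]
  · simp [dropEdge, h]

variable (K : Type) [Field K] (t : Bool)

theorem sum_partialPullback_dropEdge_mul_prependEdge (v : E.V)
    (hfin : {e : E.Edge | E.s e = v}.Finite) (hne : {e : E.Edge | E.s e = v}.Nonempty) :
    ∑ e ∈ hfin.toFinset, partialPullback K (dropEdge e) * partialPullback K (prependEdge e) =
      partialPullback K (startingAt v) := by
  classical
  ext f p
  simp only [partialPullback_mul, dropEdge_bind_prependEdge, LinearMap.sum_apply,
    Finset.sum_apply, partialPullback_apply, startingAt]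
  rcases hp : p.edge 0 with _ | e₀
  · have hv : p.vert 0 ≠ v := fun hv => by
      obtain ⟨e, he⟩ := hne
      exact p.edge_eq_none 0 hp e (he.trans hv.symm)
    simp [hv]
  · have hse := (p.edge_eq_some 0 e₀ hp).1
    simp [apply_ite (Option.elim · 0 f), Finset.sum_ite_eq, hse]

noncomputable def generatorAction : E.ext.Gen → Module.End K (E.MaxPath → K) :=
  Sum.elim (fun u => partialPullback K (startingAt u))
    (Sum.elim (fun e => partialPullback K (dropEdge e)) fun e => partialPullback K (prependEdge e))

theorem lift_generatorAction_ι_mul_ι (x y : E.ext.Gen) :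
    FreeAlgebra.lift K (generatorAction K) (FreeAlgebra.ι K x * FreeAlgebra.ι K y) =
      generatorAction K x * generatorAction K y := by
  rw [map_mul, FreeAlgebra.lift_ι_apply, FreeAlgebra.lift_ι_apply]

theorem generatorAction_rel ⦃a b : FreeAlgebra K E.ext.Gen⦄ (h : E.CLRel K t a b) :
    FreeAlgebra.lift K (generatorAction K) a = FreeAlgebra.lift K (generatorAction K) b := by
  classical
  induction h with
  | base _ h =>
    refine pathRel_of_isArrowBetween _ (fun u => ?_) (fun g => ?_) h <;>
      simp only [FreeAlgebra.lift_ι_apply]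
    · exact isArrowBetween_partialPullback K (isPartialArrow_startingAt (E := E) u)
    · cases g with
      | inl e => exact isArrowBetween_partialPullback K (isPartialArrow_dropEdge e)
      | inr e => exact isArrowBetween_partialPullback K (isPartialArrow_prependEdge e)
  | ck1_eq _ e =>
    exact (lift_generatorAction_ι_mul_ι K _ _).trans (((partialPullback_mul _ _).trans
      (congrArg _ (prependEdge_bind_dropEdge e))).trans
        (FreeAlgebra.lift_ι_apply (generatorAction K) (Sum.inl (E.r e))).symm)
  | ck1_ne _ e f h =>
    exact (lift_generatorAction_ι_mul_ι K _ _).trans (((partialPullback_mul _ _).trans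
      (congrArg _ (prependEdge_bind_dropEdge_of_ne h))).trans (map_zero _).symm)
  | ck2 v hfin hne =>
    refine (FreeAlgebra.lift_ι_apply _ _).trans
      ((sum_partialPullback_dropEdge_mul_prependEdge K v hfin hne).symm.trans ?_)
    refine Eq.trans ?_ (map_sum _ _ _).symm
    exact Finset.sum_congr rfl fun e _ =>
      (lift_generatorAction_ι_mul_ι (E := E) K (.inr (.inl e)) (.inr (.inr e))).symm

noncomputable def representation : E.CL K t →ₐ[K] Module.End K (E.MaxPath → K) :=
  RingQuot.liftAlgHom K ⟨FreeAlgebra.lift K (generatorAction K), generatorAction_rel K t⟩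

end MaxPath

end

variable (K : Type) [Field K] (E : DirGraph) (t : Bool)

theorem representation_cledg (e : E.Edge) :
    MaxPath.representation K t (E.cledg K t e) = partialPullback K (MaxPath.dropEdge e) := by
  rw [MaxPath.representation, cledg, RingQuot.liftAlgHom_mkAlgHom_apply]
  exact FreeAlgebra.lift_ι_apply _ _

theorem cledg_ne_zero (e : E.Edge) : E.cledg K t e ≠ 0 := by
  intro h
  have h0 : partialPullback K (MaxPath.dropEdge e) = 0 := by
    rw [← representation_cledg, h, map_zero]
  have := congrFun (LinearMap.congr_fun h0 fun _ => (1 : K))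
    ((MaxPath.ofVertex (E.r e)).cons e (MaxPath.ofVertex_vert_zero _).symm)
  rw [partialPullback_apply, MaxPath.dropEdge_cons] at this
  exact one_ne_zero this

section Relations

variable [DecidableEq E.V]

instance : DecidableEq E.ext.V := ‹DecidableEq E.V›

theorem vtx_isArrowBetween (u : E.V) : IsArrowBetween (E.vtx K) u u (E.vtx K u) :=
  isArrowBetween_vertex _ (fun _ _ h => RingQuot.mkAlgHom_rel K h) u

theorem edg_isArrowBetween (e : E.Edge) :
    IsArrowBetween (E.vtx K) (E.s e) (E.r e) (E.edg K e) :=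
  isArrowBetween_edge _ (fun _ _ h => RingQuot.mkAlgHom_rel K h) e

theorem clvtx_isArrowBetween (u : E.V) :
    IsArrowBetween (E.clvtx K t) u u (E.clvtx K t u) :=
  isArrowBetween_vertex (E := E.ext) _ (fun _ _ h => RingQuot.mkAlgHom_rel K (.base t h)) u

theorem cledg_isArrowBetween (e : E.Edge) :
    IsArrowBetween (E.clvtx K t) (E.s e) (E.r e) (E.cledg K t e) :=
  isArrowBetween_edge (E := E.ext) _ (fun _ _ h => RingQuot.mkAlgHom_rel K (.base t h)) (.inl e)

theorem clghost_isArrowBetween (e : E.Edge) :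
    IsArrowBetween (E.clvtx K t) (E.r e) (E.s e) (E.clghost K t e) :=
  isArrowBetween_edge (E := E.ext) _ (fun _ _ h => RingQuot.mkAlgHom_rel K (.base t h)) (.inr e)

end Relations

theorem edg_mem (e : E.Edge) : E.edg K e ∈ E.KE K :=
  NonUnitalAlgebra.subset_adjoin K (Or.inr ⟨e, rfl⟩)

theorem commute_unitKE {a : E.PA K} (ha : a ∈ E.KE K) : Commute a (E.unitKE K) := by
  classical
  refine commute_finsum_of_mem_adjoin ?_ ha
  rintro _ (⟨u, rfl⟩ | ⟨e, rfl⟩)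
  exacts [⟨u, u, E.vtx_isArrowBetween K u⟩, ⟨_, _, E.edg_isArrowBetween K e⟩]

theorem cledg_mem (e : E.Edge) : E.cledg K t e ∈ E.clSub K t :=
  NonUnitalAlgebra.subset_adjoin K (Or.inl (Or.inr ⟨e, rfl⟩))

theorem clOne_mem_clSub : E.clOne K t ∈ E.clSub K t :=
  finsum_induction _ (zero_mem _) (fun _ _ => add_mem)
    fun u => NonUnitalAlgebra.subset_adjoin K (Or.inl (Or.inl ⟨u, rfl⟩))

theorem commute_clOne {a : E.CL K t} (ha : a ∈ E.clSub K t) : Commute a (E.clOne K t) := by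
  classical
  refine commute_finsum_of_mem_adjoin ?_ ha
  rintro _ ((⟨u, rfl⟩ | ⟨e, rfl⟩) | ⟨e, rfl⟩)
  exacts [⟨u, u, E.clvtx_isArrowBetween K t u⟩, ⟨_, _, E.cledg_isArrowBetween K t e⟩,
    ⟨_, _, E.clghost_isArrowBetween K t e⟩]

theorem smul_clOne_mem_clCenter (k : K) : k • E.clOne K t ∈ E.clCenter K t :=
  ⟨SMulMemClass.smul_mem k (E.clOne_mem_clSub K t), fun a ha => by
    rw [mul_smul_comm, smul_mul_assoc, (E.commute_clOne K t ha).eq]⟩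

theorem exists_eq_smul_clOne_of_mem_clCenter [Finite E.V] (hconn : E.IsConnectedGraph)
    {z : E.CL K t} (hz : z ∈ Submodule.span K (Set.range (E.clvtx K t)))
    (hzc : z ∈ E.clCenter K t) : ∃ k : K, z = k • E.clOne K t := by
  classical
  exact exists_eq_smul_finsum_of_commutator_mem (I := {0}) hconn (E.cledg_isArrowBetween K t)
    (by simp) (E.cledg_ne_zero K t) hz fun e => by simp [hzc.2 _ (E.cledg_mem K t e)]

theorem eq_zero_of_mem_clCenter [Infinite E.V] (hconn : E.IsConnectedGraph)
    {z : E.CL K t} (hz : z ∈ Submodule.span K (Set.range (E.clvtx K t)))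
    (hzc : z ∈ E.clCenter K t) : z = 0 := by
  classical
  exact eq_zero_of_commutator_mem (I := {0}) hconn (E.cledg_isArrowBetween K t)
    (by simp) (E.cledg_ne_zero K t) hz fun e => by simp [hzc.2 _ (E.cledg_mem K t e)]

end DirGraph

/-- Let `E` be connected, `I` an ideal of `KÊ` containing no edge of `E`,
and `A = KÊ/I` (described here via the projection, i.e. working modulo `I`).
If `E⁰` is finite then `span p(E⁰) ∩ Z(A) = K·1`; if `E⁰` is infinite then
`span p(E⁰) ∩ Z(A) = 0`.  In particular, for `A` the Cohn (`t = false`) or Leavitt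
(`t = true`) path algebra of a connected graph, `span E⁰ ∩ Z(A)` is `K·1` if `E⁰`
is finite and `0` otherwise. -/
theorem stmt10 (K : Type) [Field K] (E : DirGraph) (hconn : E.IsConnectedGraph)
    (I : Set (E.ext.PA K))
    (hI : IsIdealOf K (E.ext.KE K : Set (E.ext.PA K)) I)
    (hIe : ∀ e : E.Edge, E.ext.edg K (Sum.inl e) ∉ I) :
    ((Finite E.V →
        ∀ z ∈ Submodule.span K (Set.range (E.ext.vtx K)),
          (∀ a ∈ E.ext.KE K, a * z - z * a ∈ I) →
          ∃ k : K, z - k • E.ext.unitKE K ∈ I) ∧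
      (Infinite E.V →
        ∀ z ∈ Submodule.span K (Set.range (E.ext.vtx K)),
          (∀ a ∈ E.ext.KE K, a * z - z * a ∈ I) → z ∈ I) ∧
      (∀ k : K, k • E.ext.unitKE K ∈ Submodule.span K (Set.range (E.ext.vtx K)) ∧
        ∀ a ∈ E.ext.KE K,
          a * (k • E.ext.unitKE K) - (k • E.ext.unitKE K) * a ∈ I)) ∧
    (∀ t : Bool,
      (Finite E.V →
        ∀ z ∈ Submodule.span K (Set.range (E.clvtx K t)),
          z ∈ E.clCenter K t → ∃ k : K, z = k • E.clOne K t) ∧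
      (Finite E.V →
        ∀ k : K, k • E.clOne K t ∈ Submodule.span K (Set.range (E.clvtx K t)) ∧
          k • E.clOne K t ∈ E.clCenter K t) ∧
      (Infinite E.V →
        ∀ z ∈ Submodule.span K (Set.range (E.clvtx K t)),
          z ∈ E.clCenter K t → z = 0)) := by
  classical
  obtain ⟨-, hI0, -, hIsmul, -⟩ := hI
  have hedg (e : E.Edge) : IsArrowBetween (E.ext.vtx K) (E.s e) (E.r e) (E.ext.edg K (.inl e)) :=
    E.ext.edg_isArrowBetween K (.inl e)
  refine ⟨⟨fun _ z hz hzI => ?_, fun _ z hz hzI => ?_, fun k => ⟨?_, fun a ha => ?_⟩⟩,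
    fun t => ⟨fun _ z => E.exists_eq_smul_clOne_of_mem_clCenter K t hconn, fun _ k => ?_,
      fun _ z => E.eq_zero_of_mem_clCenter K t hconn⟩⟩
  · obtain ⟨k, rfl⟩ := DirGraph.exists_eq_smul_finsum_of_commutator_mem hconn hedg hIsmul hIe hz
      fun e => hzI _ (E.ext.edg_mem K _)
    refine ⟨k, ?_⟩
    show k • E.ext.unitKE K - k • E.ext.unitKE K ∈ I
    rwa [sub_self]
  · rwa [DirGraph.eq_zero_of_commutator_mem hconn hedg hIsmul hIe hz
      fun e => hzI _ (E.ext.edg_mem K _)]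
  · exact Submodule.smul_mem _ k (finsum_mem_span_range _)
  · rwa [mul_smul_comm, smul_mul_assoc, (E.ext.commute_unitKE K ha).eq, sub_self]
  · exact ⟨Submodule.smul_mem _ k (finsum_mem_span_range _), E.smul_clOne_mem_clCenter K t k⟩
end

section
/- Let E be any directed graph, K a field, A = C_K(E) or A = L_K(E), and z a nonzero central element of A with Peirce decomposition z = Σ_w z_w (z_w = zw ∈ wAw). If there is a path μ with s(μ) = u and r(μ) = v and z_u = 0, then z_v = 0. Consequently the set H = {u ∈ E^0 : z_u = 0} is a hereditary subset of E^0. -/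
lemma stmt11_ghost_mul_edge (K : Type) [Field K] (E : DirGraph) (t : Bool) (e : E.Edge) :
    E.clghost K t e * E.cledg K t e = E.clvtx K t (E.r e) := by
  unfold DirGraph.clghost DirGraph.cledg DirGraph.clvtx
  rw [← map_mul]
  exact RingQuot.mkAlgHom_rel K (DirGraph.CLRel.ck1_eq t e)

lemma stmt11_vtx_mul_edge (K : Type) [Field K] (E : DirGraph) (t : Bool) (e : E.Edge) :
    E.clvtx K t (E.s e) * E.cledg K t e = E.cledg K t e := by
  unfold DirGraph.cledg DirGraph.clvtx
  rw [← map_mul]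
  exact RingQuot.mkAlgHom_rel K
    (DirGraph.CLRel.base t (DirGraph.PathRel.ve_eq (E := E.ext) (Sum.inl e)))

lemma stmt11_step (K : Type) [Field K] (E : DirGraph) (t : Bool)
    (z : E.CL K t) (hz : z ∈ E.clCenter K t) (e : E.Edge)
    (h : z * E.clvtx K t (E.s e) = 0) : z * E.clvtx K t (E.r e) = 0 := by
  have hg : E.clghost K t e ∈ E.clSub K t :=
    NonUnitalAlgebra.subset_adjoin K (Or.inr ⟨e, rfl⟩)
  have hcomm : E.clghost K t e * z = z * E.clghost K t e := hz.2 _ hg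
  calc z * E.clvtx K t (E.r e)
      = z * (E.clghost K t e * E.cledg K t e) := by rw [stmt11_ghost_mul_edge]
    _ = (z * E.clghost K t e) * E.cledg K t e := by rw [mul_assoc]
    _ = E.clghost K t e * (z * (E.clvtx K t (E.s e) * E.cledg K t e)) := by
        rw [← hcomm, mul_assoc, stmt11_vtx_mul_edge]
    _ = E.clghost K t e * ((z * E.clvtx K t (E.s e)) * E.cledg K t e) := by
        rw [mul_assoc]
    _ = 0 := by rw [h, zero_mul, mul_zero]

/-- For `A = C_K(E)` (`t = false`) or `A = L_K(E)` (`t = true`) and a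
nonzero central element `z` with Peirce components `z_w = z·w`: if there is a path from `u`
to `v` and `z_u = 0`, then `z_v = 0`.  Consequently `H = {u ∈ E⁰ : z_u = 0}` is hereditary. -/
theorem stmt11 (K : Type) [Field K] (E : DirGraph) (t : Bool)
    (z : E.CL K t) (hz : z ∈ E.clCenter K t) (hz0 : z ≠ 0) :
    (∀ (u v : E.V) (l : List E.Edge), E.IsPathFrom u v l →
        z * E.clvtx K t u = 0 → z * E.clvtx K t v = 0) ∧
    E.Hereditary {u : E.V | z * E.clvtx K t u = 0} := by
  have main : ∀ (l : List E.Edge) (u v : E.V), E.IsPathFrom u v l →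
      z * E.clvtx K t u = 0 → z * E.clvtx K t v = 0 := by
    intro l
    induction l with
    | nil => intro u v h h0; cases h; exact h0
    | cons e l ih =>
      intro u v h h0
      obtain ⟨hse, hrest⟩ := h
      exact ih _ _ hrest (stmt11_step K E t z hz e (hse ▸ h0))
  exact ⟨fun u v l h h0 => main l u v h h0, fun u v l h h0 => main l u v h h0⟩
end

section
/- Let A = ⊕_{n ∈ ℤ} A_n be a ℤ-graded algebra equipped with an involution * satisfying A_n* = A_{−n} for every integer n. Let Z = Z(A) be the center of A with induced grading Z = ⊕_n Z_n where Z_n = Z ∩ A_n. Suppose Z is a domain and Z_0 is a field. Then every nonzero homogeneous component Z_n is isomorphic to Z_0 as a Z_0-vector space, and either Z = Z_0 or Z is isomorphic as a graded Z_0-algebra to the Laurent polynomial algebra Z_0[x, x^{−1}]. -/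
/-!
A nonzero homogeneous central element `x` of degree `n` is invertible: `x * star x` is central,
nonzero because `Z(A)` is a domain, and of degree `0`, so it has an inverse `y` in the field `Z₀`,
and `star x * y` is a central inverse of `x` of degree `-n`. Hence the degrees of nonzero
homogeneous central elements are the degrees of homogeneous central units, which form a subgroup
`dℤ` of `ℤ` with `d ≥ 0`. If `d = 0` the centre lies in `A₀`; otherwise a central unit `u` of
degree `d` exists, and every nonzero central `z` of degree `d * i` is `(z * u⁻ⁱ) * uⁱ` with
`z * u⁻ⁱ ∈ Z₀`.
-/

open DirectSum

namespace GradedAlgebra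

variable {K A : Type} [Field K] [Ring A] [Algebra K A]

theorem star_mem_center (star : A → A) (hstar_mul : ∀ a b : A, star (a * b) = star b * star a)
    (hstar_invol : ∀ a : A, star (star a) = a) {z : A} (hz : z ∈ Subalgebra.center K A) :
    star z ∈ Subalgebra.center K A := by
  rw [Subalgebra.mem_center_iff] at hz ⊢
  intro a
  calc a * star z = star (z * star a) := by rw [hstar_mul, hstar_invol]
    _ = star (star a * z) := by rw [hz]
    _ = star z * a := by rw [hstar_mul, hstar_invol]

theorem units_zpow_mem_center {u : Aˣ} (hu : (u : A) ∈ Subalgebra.center K A) (i : ℤ) :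
    ((u ^ i : Aˣ) : A) ∈ Subalgebra.center K A :=
  Subalgebra.mem_center_iff.2 fun b => (Commute.units_zpow_right
    (Subalgebra.mem_center_iff.1 hu b) i)

variable (𝒜 : ℤ → Submodule K A) [GradedAlgebra 𝒜]

theorem units_zpow_mem_graded {d : ℤ} {u : Aˣ} (hu : (u : A) ∈ 𝒜 d)
    (hu_inv : ((u⁻¹ : Aˣ) : A) ∈ 𝒜 (-d)) (i : ℤ) : ((u ^ i : Aˣ) : A) ∈ 𝒜 (d * i) := by
  induction i using Int.induction_on with
  | zero => simpa using SetLike.one_mem_graded 𝒜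
  | succ k ih =>
    rw [zpow_add_one, Units.val_mul, mul_add_one]
    exact SetLike.mul_mem_graded ih hu
  | pred k ih =>
    rw [zpow_sub_one, Units.val_mul, mul_sub_one, sub_eq_add_neg]
    exact SetLike.mul_mem_graded ih hu_inv

theorem decompose_mem_center {z : A} (hz : z ∈ Subalgebra.center K A) (n : ℤ) :
    (decompose 𝒜 z n : A) ∈ Subalgebra.center K A := by
  rw [Subalgebra.mem_center_iff] at hz ⊢
  intro a
  induction a using DirectSum.Decomposition.inductionOn 𝒜 with
  | zero => simp
  | @homogeneous i a =>
    rw [← coe_decompose_mul_add_of_left_mem 𝒜 a.2, hz, add_comm,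
      coe_decompose_mul_add_of_right_mem 𝒜 a.2]
  | add a b ha hb => rw [add_mul, mul_add, ha, hb]

theorem center_le_graded_zero
    (h : ∀ n ≠ 0, ∀ z ∈ Subalgebra.center K A, z ∈ 𝒜 n → z = 0) {z : A}
    (hz : z ∈ Subalgebra.center K A) : z ∈ 𝒜 0 := by
  classical
  rw [← sum_support_decompose 𝒜 z]
  refine Submodule.sum_mem _ fun i _ => ?_
  obtain rfl | hi := eq_or_ne i 0
  · exact (decompose 𝒜 z 0).2
  · rw [h i hi _ (decompose_mem_center 𝒜 hz i) (decompose 𝒜 z i).2]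
    exact zero_mem _

theorem exists_mem_graded_zero_eq_mul_units_zpow {d i : ℤ} {u : Aˣ}
    (hu_center : (u : A) ∈ Subalgebra.center K A) (hu : (u : A) ∈ 𝒜 d)
    (hu_inv : ((u⁻¹ : Aˣ) : A) ∈ 𝒜 (-d)) {z : A} (hz_center : z ∈ Subalgebra.center K A)
    (hz : z ∈ 𝒜 (d * i)) :
    ∃ a ∈ Subalgebra.center K A, a ∈ 𝒜 0 ∧ z = a * ((u ^ i : Aˣ) : A) := by
  refine ⟨z * ((u ^ (-i) : Aˣ) : A), mul_mem hz_center (units_zpow_mem_center hu_center _),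
    ?_, ?_⟩
  · simpa [mul_neg] using SetLike.mul_mem_graded hz (units_zpow_mem_graded 𝒜 hu hu_inv (-i))
  · rw [mul_assoc, ← Units.val_mul, ← zpow_add, neg_add_cancel, zpow_zero, Units.val_one,
      mul_one]

theorem exists_unit_of_mem_center (star : A →ₗ[K] A)
    (hstar_mul : ∀ a b : A, star (a * b) = star b * star a)
    (hstar_invol : ∀ a : A, star (star a) = a)
    (hstar_deg : ∀ (n : ℤ), ∀ a ∈ 𝒜 n, star a ∈ 𝒜 (-n))
    (hdom : ∀ x ∈ Subalgebra.center K A, ∀ y ∈ Subalgebra.center K A,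
      x * y = 0 → x = 0 ∨ y = 0)
    (hfield : ∀ x ∈ Subalgebra.center K A, x ∈ 𝒜 0 → x ≠ 0 →
      ∃ y ∈ Subalgebra.center K A, y ∈ 𝒜 0 ∧ x * y = 1)
    {n : ℤ} {x : A} (hx_center : x ∈ Subalgebra.center K A) (hx : x ∈ 𝒜 n) (hx0 : x ≠ 0) :
    ∃ u : Aˣ, (u : A) = x ∧ ((u⁻¹ : Aˣ) : A) ∈ 𝒜 (-n) := by
  have hstar_center := star_mem_center star hstar_mul hstar_invol hx_center
  have hstar0 : star x ≠ 0 := fun h => hx0 (by rw [← hstar_invol x, h, map_zero])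
  have hnorm0 : x * star x ≠ 0 := fun h =>
    (hdom x hx_center _ hstar_center h).elim hx0 hstar0
  have hnorm : x * star x ∈ 𝒜 0 := by
    simpa using SetLike.mul_mem_graded hx (hstar_deg n x hx)
  obtain ⟨y, hy_center, hy, hxy⟩ := hfield _ (mul_mem hx_center hstar_center) hnorm hnorm0
  have hright : x * (star x * y) = 1 := by rw [← mul_assoc, hxy]
  have hleft : star x * y * x = 1 := by rw [Subalgebra.mem_center_iff.1 hx_center, hright]
  exact ⟨⟨x, star x * y, hright, hleft⟩, rfl,
    by simpa using SetLike.mul_mem_graded (hstar_deg n x hx) hy⟩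

-- The degree of `u⁻¹` is recorded because it is needed to keep negative powers of `u` homogeneous.
def centralUnitDegrees : AddSubgroup ℤ where
  carrier := {n | ∃ u : Aˣ, (u : A) ∈ Subalgebra.center K A ∧ (u : A) ∈ 𝒜 n ∧
    ((u⁻¹ : Aˣ) : A) ∈ 𝒜 (-n)}
  zero_mem' := ⟨1, one_mem _, SetLike.one_mem_graded 𝒜, by simpa using SetLike.one_mem_graded 𝒜⟩
  add_mem' := by
    rintro m n ⟨u, hu_center, hu, hu_inv⟩ ⟨v, hv_center, hv, hv_inv⟩
    refine ⟨u * v, mul_mem hu_center hv_center, SetLike.mul_mem_graded hu hv, ?_⟩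
    rw [mul_inv_rev, Units.val_mul, neg_add_rev]
    exact SetLike.mul_mem_graded hv_inv hu_inv
  neg_mem' := by
    rintro n ⟨u, hu_center, hu, hu_inv⟩
    refine ⟨u⁻¹, Set.units_inv_mem_center hu_center, hu_inv, ?_⟩
    rwa [inv_inv, neg_neg]

end GradedAlgebra

open GradedAlgebra

/-- Let `A = ⊕ₙ Aₙ` be a ℤ-graded algebra with an involution `*` such that
`Aₙ* = A₋ₙ`, and let `Z = Z(A)` with the induced grading `Zₙ = Z ∩ Aₙ`.  Assume `Z` is a
domain and `Z₀` is a field.  Then every nonzero component `Zₙ` is a one-dimensional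
`Z₀`-vector space (hence isomorphic to `Z₀`), and either `Z = Z₀`, or `Z` is isomorphic, as
a graded algebra, to the Laurent polynomial algebra `Z₀[x, x⁻¹]`: there is a central
invertible homogeneous element `u` of minimal positive degree `d` such that every nonzero
homogeneous central element has degree `d·i` for some `i : ℤ` and equals `a·uⁱ` with
`a ∈ Z₀`. -/
theorem stmt15 (K : Type) [Field K] (A : Type) [Ring A] [Algebra K A]
    (𝒜 : ℤ → Submodule K A) [GradedAlgebra 𝒜]
    (star : A →ₗ[K] A)
    (hstar_mul : ∀ a b : A, star (a * b) = star b * star a)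
    (hstar_invol : ∀ a : A, star (star a) = a)
    (hstar_deg : ∀ (n : ℤ), ∀ a ∈ 𝒜 n, star a ∈ 𝒜 (-n))
    (hdom : ∀ x ∈ Subalgebra.center K A, ∀ y ∈ Subalgebra.center K A,
      x * y = 0 → x = 0 ∨ y = 0)
    (hfield : ∀ x ∈ Subalgebra.center K A, x ∈ 𝒜 0 → x ≠ 0 →
      ∃ y ∈ Subalgebra.center K A, y ∈ 𝒜 0 ∧ x * y = 1) :
    (∀ n : ℤ, (∃ x ∈ Subalgebra.center K A, x ∈ 𝒜 n ∧ x ≠ 0) →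
      ∃ x ∈ Subalgebra.center K A, x ∈ 𝒜 n ∧ x ≠ 0 ∧
        ∀ y ∈ Subalgebra.center K A, y ∈ 𝒜 n →
          ∃ a ∈ Subalgebra.center K A, a ∈ 𝒜 0 ∧ y = a * x) ∧
    ((∀ z ∈ Subalgebra.center K A, z ∈ 𝒜 0) ∨
      ∃ d : ℤ, 0 < d ∧
        (∀ n : ℤ, 0 < n → n < d → ∀ z ∈ Subalgebra.center K A, z ∈ 𝒜 n → z = 0) ∧
        ∃ u : Aˣ, (u : A) ∈ Subalgebra.center K A ∧ (u : A) ∈ 𝒜 d ∧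
          ∀ z ∈ Subalgebra.center K A, ∀ n : ℤ, z ∈ 𝒜 n → z ≠ 0 →
            ∃ i : ℤ, n = d * i ∧
              ∃ a ∈ Subalgebra.center K A, a ∈ 𝒜 0 ∧ z = a * ((u ^ i : Aˣ) : A)) := by
  have hunit {n : ℤ} {x : A} (hx_center : x ∈ Subalgebra.center K A) (hx : x ∈ 𝒜 n)
      (hx0 : x ≠ 0) : ∃ u : Aˣ, (u : A) = x ∧ ((u⁻¹ : Aˣ) : A) ∈ 𝒜 (-n) :=
    exists_unit_of_mem_center 𝒜 star hstar_mul hstar_invol hstar_deg hdom hfield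
      hx_center hx hx0
  obtain ⟨d, hd⟩ : ∃ d : ℕ, ∀ n, n ∈ centralUnitDegrees 𝒜 ↔ (d : ℤ) ∣ n := by
    obtain ⟨a, ha⟩ := Int.subgroup_cyclic (centralUnitDegrees 𝒜)
    exact ⟨a.natAbs, fun n => by rw [ha, ← AddSubgroup.zmultiples_eq_closure,
      ← Int.zmultiples_natAbs, Int.mem_zmultiples_iff]⟩
  have hdvd {n : ℤ} {z : A} (hz_center : z ∈ Subalgebra.center K A) (hz : z ∈ 𝒜 n)
      (hz0 : z ≠ 0) : (d : ℤ) ∣ n := by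
    obtain ⟨u, rfl, hu_inv⟩ := hunit hz_center hz hz0
    exact (hd n).1 ⟨u, hz_center, hz, hu_inv⟩
  refine ⟨fun n ⟨x, hx_center, hx, hx0⟩ => ?_, ?_⟩
  · obtain ⟨u, rfl, hu_inv⟩ := hunit hx_center hx hx0
    refine ⟨u, hx_center, hx, hx0, fun y hy_center hy => ?_⟩
    simpa using exists_mem_graded_zero_eq_mul_units_zpow 𝒜 (i := 1)
      hx_center hx hu_inv hy_center (by rwa [mul_one])
  rcases Nat.eq_zero_or_pos d with rfl | hd_pos
  · exact Or.inl fun z => center_le_graded_zero 𝒜 fun n hn z hz_center hz =>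
      by_contra fun hz0 => hn (zero_dvd_iff.1 (hdvd hz_center hz hz0))
  obtain ⟨u, hu_center, hu, hu_inv⟩ := (hd d).2 dvd_rfl
  refine Or.inr ⟨d, by exact_mod_cast hd_pos, fun n hn hnd z hz_center hz => ?_, u, hu_center,
    hu, fun z hz_center n hz hz0 => ?_⟩
  · by_contra hz0
    exact hnd.not_ge (Int.le_of_dvd hn (hdvd hz_center hz hz0))
  · obtain ⟨i, rfl⟩ := hdvd hz_center hz hz0
    exact ⟨i, rfl, exists_mem_graded_zero_eq_mul_units_zpow 𝒜 hu_center hu hu_inv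
      hz_center hz⟩
end

section
/- Let E be a directed graph, K a field, and A = L_K(E) or A = C_K(E) with its canonical ℤ-grading. Every element z of degree zero in the center of A is symmetric, i.e., z is a K-linear combination of elements of the form μμ* where μ is a path in E. In particular, every degree-zero central element is fixed by the canonical involution. -/
section Stmt16Aux

open DirGraph
open scoped Classical

variable {K : Type} [Field K] {E : DirGraph} {t : Bool}

private lemma CLrel_eq {a b : FreeAlgebra K E.ext.Gen} (h : E.CLRel K t a b) :
    RingQuot.mkAlgHom K (E.CLRel K t) a = RingQuot.mkAlgHom K (E.CLRel K t) b :=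
  RingQuot.mkAlgHom_rel _ h

private lemma vv_eq (u : E.V) : E.clvtx K t u * E.clvtx K t u = E.clvtx K t u := by
  simp only [DirGraph.clvtx, ← map_mul]
  exact CLrel_eq (CLRel.base t (PathRel.vv_eq (K := K) (E := E.ext) u))

private lemma vv_ne {u u' : E.V} (h : u ≠ u') : E.clvtx K t u * E.clvtx K t u' = 0 := by
  simp only [DirGraph.clvtx, ← map_mul]
  rw [show (0 : E.CL K t) = RingQuot.mkAlgHom K (E.CLRel K t) 0 from (map_zero _).symm]
  exact CLrel_eq (CLRel.base t (PathRel.vv_ne (K := K) (E := E.ext) u u' h))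

private lemma ve_eq (e : E.Edge) :
    E.clvtx K t (E.s e) * E.cledg K t e = E.cledg K t e := by
  simp only [DirGraph.clvtx, DirGraph.cledg, ← map_mul]
  exact CLrel_eq (CLRel.base t (PathRel.ve_eq (K := K) (E := E.ext) (Sum.inl e)))

private lemma ve_ne {u : E.V} {e : E.Edge} (h : E.s e ≠ u) :
    E.clvtx K t u * E.cledg K t e = 0 := by
  simp only [DirGraph.clvtx, DirGraph.cledg, ← map_mul]
  rw [show (0 : E.CL K t) = RingQuot.mkAlgHom K (E.CLRel K t) 0 from (map_zero _).symm]
  exact CLrel_eq (CLRel.base t (PathRel.ve_ne (K := K) (E := E.ext) u (Sum.inl e) h))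

private lemma ev_eq (e : E.Edge) :
    E.cledg K t e * E.clvtx K t (E.r e) = E.cledg K t e := by
  simp only [DirGraph.clvtx, DirGraph.cledg, ← map_mul]
  exact CLrel_eq (CLRel.base t (PathRel.ev_eq (K := K) (E := E.ext) (Sum.inl e)))

private lemma ev_ne {u : E.V} {e : E.Edge} (h : E.r e ≠ u) :
    E.cledg K t e * E.clvtx K t u = 0 := by
  simp only [DirGraph.clvtx, DirGraph.cledg, ← map_mul]
  rw [show (0 : E.CL K t) = RingQuot.mkAlgHom K (E.CLRel K t) 0 from (map_zero _).symm]
  exact CLrel_eq (CLRel.base t (PathRel.ev_ne (K := K) (E := E.ext) (Sum.inl e) u h))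

private lemma vg_eq (e : E.Edge) :
    E.clvtx K t (E.r e) * E.clghost K t e = E.clghost K t e := by
  simp only [DirGraph.clvtx, DirGraph.clghost, ← map_mul]
  exact CLrel_eq (CLRel.base t (PathRel.ve_eq (K := K) (E := E.ext) (Sum.inr e)))

private lemma vg_ne {u : E.V} {e : E.Edge} (h : E.r e ≠ u) :
    E.clvtx K t u * E.clghost K t e = 0 := by
  simp only [DirGraph.clvtx, DirGraph.clghost, ← map_mul]
  rw [show (0 : E.CL K t) = RingQuot.mkAlgHom K (E.CLRel K t) 0 from (map_zero _).symm]
  exact CLrel_eq (CLRel.base t (PathRel.ve_ne (K := K) (E := E.ext) u (Sum.inr e) h))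

private lemma gv_eq (e : E.Edge) :
    E.clghost K t e * E.clvtx K t (E.s e) = E.clghost K t e := by
  simp only [DirGraph.clvtx, DirGraph.clghost, ← map_mul]
  exact CLrel_eq (CLRel.base t (PathRel.ev_eq (K := K) (E := E.ext) (Sum.inr e)))

private lemma gv_ne {u : E.V} {e : E.Edge} (h : E.s e ≠ u) :
    E.clghost K t e * E.clvtx K t u = 0 := by
  simp only [DirGraph.clvtx, DirGraph.clghost, ← map_mul]
  rw [show (0 : E.CL K t) = RingQuot.mkAlgHom K (E.CLRel K t) 0 from (map_zero _).symm]
  exact CLrel_eq (CLRel.base t (PathRel.ev_ne (K := K) (E := E.ext) (Sum.inr e) u h))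

private lemma ge_eq (e : E.Edge) :
    E.clghost K t e * E.cledg K t e = E.clvtx K t (E.r e) := by
  simp only [DirGraph.clvtx, DirGraph.cledg, DirGraph.clghost, ← map_mul]
  exact CLrel_eq (CLRel.ck1_eq t e)

private lemma ge_ne {e f : E.Edge} (h : e ≠ f) :
    E.clghost K t e * E.cledg K t f = 0 := by
  simp only [DirGraph.cledg, DirGraph.clghost, ← map_mul]
  rw [show (0 : E.CL K t) = RingQuot.mkAlgHom K (E.CLRel K t) 0 from (map_zero _).symm]
  exact CLrel_eq (CLRel.ck1_ne t e f h)

private lemma clPath_nil (u : E.V) : E.clPath K t u [] = E.clvtx K t u := by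
  simp [DirGraph.clPath]

private lemma clPathStar_nil (u : E.V) : E.clPathStar K t u [] = E.clvtx K t u := by
  simp [DirGraph.clPathStar]

private lemma clPath_cons {e : E.Edge} {u : E.V} (h : E.s e = u) (l : List E.Edge) :
    E.clPath K t u (e :: l) = E.cledg K t e * E.clPath K t (E.r e) l := by
  subst h
  simp only [DirGraph.clPath, List.map_cons, List.prod_cons, ← mul_assoc]
  rw [ve_eq, ev_eq]

private lemma clPathStar_cons {e : E.Edge} {u : E.V} (h : E.s e = u) (l : List E.Edge) :
    E.clPathStar K t u (e :: l) = E.clPathStar K t (E.r e) l * E.clghost K t e := by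
  simp only [DirGraph.clPathStar, List.map_cons, List.reverse_cons, List.prod_append,
    List.prod_cons, List.prod_nil, mul_one, mul_assoc]
  subst h
  rw [gv_eq, vg_eq]

private lemma vtx_mul_clPath_self (u : E.V) (l : List E.Edge) :
    E.clvtx K t u * E.clPath K t u l = E.clPath K t u l := by
  simp only [DirGraph.clPath, ← mul_assoc, vv_eq]

private lemma vtx_mul_clPath_ne {u u' : E.V} (h : u' ≠ u) (l : List E.Edge) :
    E.clvtx K t u' * E.clPath K t u l = 0 := by
  simp only [DirGraph.clPath, ← mul_assoc, vv_ne h, zero_mul]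

private lemma clPathStar_mul_vtx_self (u : E.V) (l : List E.Edge) :
    E.clPathStar K t u l * E.clvtx K t u = E.clPathStar K t u l := by
  simp only [DirGraph.clPathStar, mul_assoc, vv_eq]

private lemma clPathStar_mul_vtx_ne {u u' : E.V} (h : u ≠ u') (l : List E.Edge) :
    E.clPathStar K t u l * E.clvtx K t u' = 0 := by
  simp only [DirGraph.clPathStar, mul_assoc, vv_ne h, mul_zero]

private lemma clPath_mul_vtx_self {u v : E.V} {l : List E.Edge} (h : E.IsPathFrom u v l) :
    E.clPath K t u l * E.clvtx K t v = E.clPath K t u l := by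
  induction l generalizing u with
  | nil => rw [clPath_nil, show u = v from h, vv_eq]
  | cons e l ih =>
      obtain ⟨h1, h2⟩ := h
      rw [clPath_cons h1, mul_assoc, ih h2]

private lemma clPath_mul_vtx_ne {u v v' : E.V} {l : List E.Edge} (h : E.IsPathFrom u v l)
    (hne : v ≠ v') : E.clPath K t u l * E.clvtx K t v' = 0 := by
  induction l generalizing u with
  | nil => rw [clPath_nil, show u = v from h, vv_ne hne]
  | cons e l ih =>
      obtain ⟨h1, h2⟩ := h
      rw [clPath_cons h1, mul_assoc, ih h2, mul_zero]

private lemma vtx_mul_clPathStar_self {u v : E.V} {l : List E.Edge} (h : E.IsPathFrom u v l) :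
    E.clvtx K t v * E.clPathStar K t u l = E.clPathStar K t u l := by
  induction l generalizing u with
  | nil => rw [clPathStar_nil, show u = v from h, vv_eq]
  | cons e l ih =>
      obtain ⟨h1, h2⟩ := h
      rw [clPathStar_cons h1, ← mul_assoc, ih h2]

private lemma vtx_mul_clPathStar_ne {u v v' : E.V} {l : List E.Edge} (h : E.IsPathFrom u v l)
    (hne : v' ≠ v) : E.clvtx K t v' * E.clPathStar K t u l = 0 := by
  induction l generalizing u with
  | nil => rw [clPathStar_nil, show u = v from h, vv_ne hne]
  | cons e l ih =>
      obtain ⟨h1, h2⟩ := h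
      rw [clPathStar_cons h1, ← mul_assoc, ih h2, zero_mul]

private lemma clPathStar_mul_clPath {u v : E.V} {l : List E.Edge} (h : E.IsPathFrom u v l) :
    E.clPathStar K t u l * E.clPath K t u l = E.clvtx K t v := by
  induction l generalizing u with
  | nil => rw [clPath_nil, clPathStar_nil, show u = v from h, vv_eq]
  | cons e l ih =>
      obtain ⟨h1, h2⟩ := h
      rw [clPath_cons h1, clPathStar_cons h1, mul_assoc,
        ← mul_assoc (E.clghost K t e), ge_eq, vtx_mul_clPath_self, ih h2]

private lemma clPath_append_edge (u : E.V) (l : List E.Edge) (e : E.Edge) :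
    E.clPath K t u (l ++ [e]) = E.clPath K t u l * E.cledg K t e := by
  simp [DirGraph.clPath, mul_assoc]

private lemma clPathStar_append_edge (u : E.V) (l : List E.Edge) (e : E.Edge) :
    E.clPathStar K t u (l ++ [e]) = E.clghost K t e * E.clPathStar K t u l := by
  simp [DirGraph.clPathStar, mul_assoc]

private lemma isPathFrom_append_edge {u v : E.V} {l : List E.Edge} (h : E.IsPathFrom u v l)
    {e : E.Edge} (he : E.s e = v) : E.IsPathFrom u (E.r e) (l ++ [e]) := by
  induction l generalizing u with
  | nil => exact ⟨(show u = v from h) ▸ he, rfl⟩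
  | cons f l ih => exact ⟨h.1, ih h.2⟩

private lemma ghost_mul_clPath_cons_eq {e : E.Edge} {u : E.V} (h : E.s e = u)
    (l : List E.Edge) :
    E.clghost K t e * E.clPath K t u (e :: l) = E.clPath K t (E.r e) l := by
  rw [clPath_cons h, ← mul_assoc, ge_eq, vtx_mul_clPath_self]

private lemma ghost_mul_clPath_cons_ne {e e' : E.Edge} {u : E.V} (h : E.s e' = u)
    (hne : e ≠ e') (l : List E.Edge) :
    E.clghost K t e * E.clPath K t u (e' :: l) = 0 := by
  rw [clPath_cons h, ← mul_assoc, ge_ne hne, zero_mul]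

private lemma clPathStar_cons_mul_edg_eq {e : E.Edge} {u : E.V} (h : E.s e = u)
    (l : List E.Edge) :
    E.clPathStar K t u (e :: l) * E.cledg K t e = E.clPathStar K t (E.r e) l := by
  rw [clPathStar_cons h, mul_assoc, ge_eq, clPathStar_mul_vtx_self]

private lemma clPathStar_cons_mul_edg_ne {e e' : E.Edge} {u : E.V} (h : E.s e' = u)
    (hne : e' ≠ e) (l : List E.Edge) :
    E.clPathStar K t u (e' :: l) * E.cledg K t e = 0 := by
  rw [clPathStar_cons h, mul_assoc, ge_ne hne, mul_zero]
private lemma vtx_mem (u : E.V) : E.clvtx K t u ∈ E.clSub K t :=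
  NonUnitalAlgebra.subset_adjoin K (Or.inl (Or.inl ⟨u, rfl⟩))

private lemma edg_mem (e : E.Edge) : E.cledg K t e ∈ E.clSub K t :=
  NonUnitalAlgebra.subset_adjoin K (Or.inl (Or.inr ⟨e, rfl⟩))

private lemma ghost_mem (e : E.Edge) : E.clghost K t e ∈ E.clSub K t :=
  NonUnitalAlgebra.subset_adjoin K (Or.inr ⟨e, rfl⟩)

private lemma prod_map_mem {f : E.Edge → E.CL K t} (hf : ∀ e, f e ∈ E.clSub K t) :
    ∀ (l : List E.Edge) (e : E.Edge), ((e :: l).map f).prod ∈ E.clSub K t := by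
  intro l
  induction l with
  | nil =>
      intro e
      simp only [List.map_cons, List.map_nil, List.prod_cons, List.prod_nil, mul_one]
      exact hf e
  | cons g l ih =>
      intro e
      rw [List.map_cons, List.prod_cons]
      exact mul_mem (hf e) (ih g)

private lemma clPath_mem (u : E.V) (l : List E.Edge) : E.clPath K t u l ∈ E.clSub K t := by
  cases l with
  | nil => rw [clPath_nil]; exact vtx_mem u
  | cons e l => exact mul_mem (vtx_mem u) (prod_map_mem edg_mem l e)

private lemma clPathStar_mem (u : E.V) (l : List E.Edge) :
    E.clPathStar K t u l ∈ E.clSub K t := by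
  cases l with
  | nil => rw [clPathStar_nil]; exact vtx_mem u
  | cons e l =>
      have h : ((e :: l).map (E.clghost K t)).reverse = (e :: l).reverse.map (E.clghost K t) := by
        rw [List.map_reverse]
      rw [DirGraph.clPathStar, h]
      obtain ⟨f, m, hm⟩ : ∃ f m, (e :: l).reverse = f :: m := by
        rcases hr : (e :: l).reverse with _ | ⟨f, m⟩
        · exact absurd (congrArg List.length hr) (by simp)
        · exact ⟨f, m, rfl⟩
      rw [hm]
      exact mul_mem (prod_map_mem ghost_mem m f) (vtx_mem u)

private lemma edgeIdem_mul_edgeIdem (e f : E.Edge) :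
    (E.cledg K t e * E.clghost K t e) * (E.cledg K t f * E.clghost K t f)
      = if e = f then E.cledg K t e * E.clghost K t e else 0 := by
  by_cases h : e = f
  · subst h
    rw [if_pos rfl, mul_assoc, ← mul_assoc (E.clghost K t e), ge_eq, ← mul_assoc, ev_eq]
  · rw [if_neg h, mul_assoc, ← mul_assoc (E.clghost K t e), ge_ne h, zero_mul, mul_zero]

private lemma vtx_mul_edgeIdem {e : E.Edge} {v : E.V} (h : E.s e = v) :
    E.clvtx K t v * (E.cledg K t e * E.clghost K t e) = E.cledg K t e * E.clghost K t e := by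
  subst h; rw [← mul_assoc, ve_eq]

private lemma edgeIdem_mul_vtx {e : E.Edge} {v : E.V} (h : E.s e = v) :
    (E.cledg K t e * E.clghost K t e) * E.clvtx K t v = E.cledg K t e * E.clghost K t e := by
  subst h; rw [mul_assoc, gv_eq]

private lemma edgeIdem_mul_clPath_cons {f e : E.Edge} {u : E.V} (h : E.s e = u)
    (l : List E.Edge) :
    (E.cledg K t f * E.clghost K t f) * E.clPath K t u (e :: l)
      = if f = e then E.clPath K t u (e :: l) else 0 := by
  by_cases hf : f = e
  · subst hf
    rw [if_pos rfl, mul_assoc, ghost_mul_clPath_cons_eq h, ← clPath_cons h]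
  · rw [if_neg hf, mul_assoc, ghost_mul_clPath_cons_ne h hf, mul_zero]
private def Dset (K : Type) [Field K] (E : DirGraph) (t : Bool) (n : ℕ) : Set (E.CL K t) :=
  {x | ∃ u w v l m, E.IsPathFrom u v l ∧ E.IsPathFrom w v m ∧ l.length = m.length ∧
    l.length ≤ n ∧ x = E.clPath K t u l * E.clPathStar K t w m}

private def Dset' (K : Type) [Field K] (E : DirGraph) (t : Bool) (n : ℕ) (v : E.V) :
    Set (E.CL K t) :=
  {x | ∃ v' l m, E.IsPathFrom v v' l ∧ E.IsPathFrom v v' m ∧ l.length = m.length ∧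
    l.length ≤ n ∧ x = E.clPath K t v l * E.clPathStar K t v m}

private lemma sandwich_id {A : Type} [Ring A] {p z : A} (h1 : p * z = z * p)
    (h2 : p * p = p) : p * (z * p) * p = z * p := by
  rw [← mul_assoc, h1, mul_assoc, h2, mul_assoc, h2]

private lemma mainLemma (z : E.CL K t) (hz : z ∈ E.clCenter K t) :
    ∀ (n : ℕ) (u v : E.V) (l : List E.Edge), E.IsPathFrom u v l →
      E.clPathStar K t u l * z * E.clPath K t u l ∈ Submodule.span K (Dset K E t n) →
      z * (E.clPath K t u l * E.clPathStar K t u l) ∈ E.clSymmSpan K t := by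
  have hzc : ∀ a ∈ E.clSub K t, a * z = z * a := hz.2
  intro n
  induction n using Nat.strong_induction_on with
  | _ n IH =>
  intro u v l hp hw
  -- w = μ* z μ = z · v
  have hw1 : E.clPathStar K t u l * z * E.clPath K t u l = z * E.clvtx K t v := by
    rw [hzc _ (clPathStar_mem u l), mul_assoc, clPathStar_mul_clPath hp]
  have hzV : E.clvtx K t v * z = z * E.clvtx K t v := hzc _ (vtx_mem v)
  -- project the span representation to have all sources equal to v
  have hwD : E.clPathStar K t u l * z * E.clPath K t u l
      ∈ Submodule.span K (Dset' K E t n v) := by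
    have hproj : ∀ x ∈ Dset K E t n,
        E.clvtx K t v * x * E.clvtx K t v ∈ insert (0 : E.CL K t) (Dset' K E t n v) := by
      rintro x ⟨u', w', v', l', m', hl', hm', hlen', hle', rfl⟩
      have hre : E.clvtx K t v * (E.clPath K t u' l' * E.clPathStar K t w' m') * E.clvtx K t v
          = (E.clvtx K t v * E.clPath K t u' l') * (E.clPathStar K t w' m' * E.clvtx K t v) := by
        simp only [mul_assoc]
      rw [hre]
      by_cases h1 : v = u'
      · by_cases h2 : w' = v
        · subst h1; subst h2
          rw [vtx_mul_clPath_self, clPathStar_mul_vtx_self]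
          exact Set.mem_insert_of_mem _ ⟨v', l', m', hl', hm', hlen', hle', rfl⟩
        · rw [clPathStar_mul_vtx_ne h2, mul_zero]; exact Set.mem_insert _ _
      · rw [vtx_mul_clPath_ne h1, zero_mul]; exact Set.mem_insert _ _
    have hmap := Submodule.mem_map_of_mem
      (f := (LinearMap.mulRight K (E.clvtx K t v)).comp (LinearMap.mulLeft K (E.clvtx K t v))) hw
    rw [Submodule.map_span] at hmap
    have hle2 : Submodule.span K
        (((LinearMap.mulRight K (E.clvtx K t v)).comp (LinearMap.mulLeft K (E.clvtx K t v))) ''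
          (Dset K E t n)) ≤ Submodule.span K (Dset' K E t n v) := by
      rw [← Submodule.span_insert_zero (s := Dset' K E t n v)]
      apply Submodule.span_mono
      rintro y ⟨x, hx, rfl⟩
      simpa only [LinearMap.comp_apply, LinearMap.mulLeft_apply, LinearMap.mulRight_apply]
        using hproj x hx
    have hmem := hle2 hmap
    simp only [LinearMap.comp_apply, LinearMap.mulLeft_apply, LinearMap.mulRight_apply] at hmem
    have hfix : E.clvtx K t v * (E.clPathStar K t u l * z * E.clPath K t u l) * E.clvtx K t v
        = E.clPathStar K t u l * z * E.clPath K t u l := by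
      rw [hw1]; exact sandwich_id hzV (vv_eq v)
    rwa [hfix] at hmem
  obtain ⟨k, c, xs, hsum⟩ := Submodule.mem_span_set'.mp hwD
  have hxs : ∀ i, ∃ v' lm mm', E.IsPathFrom v v' lm ∧ E.IsPathFrom v v' mm' ∧
      lm.length = mm'.length ∧ lm.length ≤ n ∧
      (xs i : E.CL K t) = E.clPath K t v lm * E.clPathStar K t v mm' := fun i => (xs i).2
  choose vv ll mm hl hm hlen hlle hx using hxs
  -- the finite set of first edges
  set Ev : Finset E.Edge :=
    Finset.univ.biUnion (fun i => (ll i).head?.toFinset ∪ (mm i).head?.toFinset) with hEv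
  have hEv_l : ∀ i e tl, ll i = e :: tl → e ∈ Ev := by
    intro i e tl h
    exact Finset.mem_biUnion.mpr ⟨i, Finset.mem_univ i,
      Finset.mem_union_left _ (by simp [h])⟩
  have hEv_m : ∀ i e tm, mm i = e :: tm → e ∈ Ev := by
    intro i e tm h
    exact Finset.mem_biUnion.mpr ⟨i, Finset.mem_univ i,
      Finset.mem_union_right _ (by simp [h])⟩
  have hEv_cases : ∀ e ∈ Ev, (∃ i tl, ll i = e :: tl) ∨ (∃ i tm, mm i = e :: tm) := by
    intro e he
    obtain ⟨i, -, hmem⟩ := Finset.mem_biUnion.mp he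
    rcases Finset.mem_union.mp hmem with h | h
    · left
      rcases hlli : ll i with _ | ⟨f, tl⟩
      · rw [hlli] at h; simp at h
      · rw [hlli] at h; simp at h; exact ⟨i, tl, by rw [hlli, h]⟩
    · right
      rcases hmmi : mm i with _ | ⟨f, tm⟩
      · rw [hmmi] at h; simp at h
      · rw [hmmi] at h; simp at h; exact ⟨i, tm, by rw [hmmi, h]⟩
  have hEv_src : ∀ e ∈ Ev, E.s e = v := by
    intro e he
    rcases hEv_cases e he with ⟨i, tl, hi⟩ | ⟨i, tm, hi⟩
    · have := hl i; rw [hi] at this; exact this.1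
    · have := hm i; rw [hi] at this; exact this.1
  have hEv_pos : ∀ e ∈ Ev, 1 ≤ n := by
    intro e he
    rcases hEv_cases e he with ⟨i, tl, hi⟩ | ⟨i, tm, hi⟩
    · have := hlle i; rw [hi] at this; exact le_trans (Nat.succ_le_succ (Nat.zero_le _)) this
    · have h1 := hlle i; have h2 := hlen i; rw [hi] at h2
      exact le_trans (Nat.succ_le_succ (Nat.zero_le _)) (h2 ▸ h1)
  set q : E.CL K t := ∑ e ∈ Ev, E.cledg K t e * E.clghost K t e with hqdef
  have hq_mem : q ∈ E.clSub K t := sum_mem fun e _ => mul_mem (edg_mem e) (ghost_mem e)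
  have hVq : E.clvtx K t v * q = q := by
    rw [hqdef, Finset.mul_sum]
    exact Finset.sum_congr rfl fun e he => vtx_mul_edgeIdem (hEv_src e he)
  have hqV : q * E.clvtx K t v = q := by
    rw [hqdef, Finset.sum_mul]
    exact Finset.sum_congr rfl fun e he => edgeIdem_mul_vtx (hEv_src e he)
  have hqq : q * q = q := by
    rw [hqdef, Finset.sum_mul]
    refine Finset.sum_congr rfl fun e he => ?_
    rw [Finset.mul_sum]
    calc ∑ f ∈ Ev, (E.cledg K t e * E.clghost K t e) * (E.cledg K t f * E.clghost K t f)
        = ∑ f ∈ Ev, if e = f then E.cledg K t e * E.clghost K t e else 0 :=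
          Finset.sum_congr rfl fun f _ => edgeIdem_mul_edgeIdem e f
      _ = E.cledg K t e * E.clghost K t e := by rw [Finset.sum_ite_eq]; exact if_pos he
  set p : E.CL K t := E.clvtx K t v - q with hpdef
  have hp_mem : p ∈ E.clSub K t := sub_mem (vtx_mem v) hq_mem
  have hpp : p * p = p := by
    rw [hpdef, sub_mul, mul_sub, mul_sub, vv_eq, hVq, hqV, hqq]
    abel
  have hVp : E.clvtx K t v * p = p := by rw [hpdef, mul_sub, vv_eq, hVq]
  have hpV : p * E.clvtx K t v = p := by rw [hpdef, sub_mul, vv_eq, hqV]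
  have hzp : p * z = z * p := hzc p hp_mem
  have hqx : ∀ i (e : E.Edge) (tl : List E.Edge), ll i = e :: tl →
      q * (xs i : E.CL K t) = (xs i : E.CL K t) := by
    intro i e tl hlli
    have hsrc : E.s e = v := by have := hl i; rw [hlli] at this; exact this.1
    rw [hx i, hlli, ← mul_assoc]
    have hqP : q * E.clPath K t v (e :: tl) = E.clPath K t v (e :: tl) := by
      rw [hqdef, Finset.sum_mul]
      calc ∑ f ∈ Ev, (E.cledg K t f * E.clghost K t f) * E.clPath K t v (e :: tl)
          = ∑ f ∈ Ev, if f = e then E.clPath K t v (e :: tl) else 0 :=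
            Finset.sum_congr rfl fun f _ => edgeIdem_mul_clPath_cons hsrc tl
        _ = E.clPath K t v (e :: tl) := by
            rw [Finset.sum_ite_eq']; exact if_pos (hEv_l i e tl hlli)
    rw [hqP]
  have hVx : ∀ i, E.clvtx K t v * (xs i : E.CL K t) = (xs i : E.CL K t) := by
    intro i; rw [hx i, ← mul_assoc, vtx_mul_clPath_self]
  have hpxp : ∀ i, p * (xs i : E.CL K t) * p = if ll i = [] then p else 0 := by
    intro i
    rcases hlli : ll i with _ | ⟨e, tl⟩
    · rw [if_pos rfl]
      have hmmi : mm i = [] := by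
        rw [← List.length_eq_zero_iff, ← hlen i, hlli]; rfl
      have hxi : (xs i : E.CL K t) = E.clvtx K t v := by
        rw [hx i, hlli, hmmi, clPath_nil, clPathStar_nil, vv_eq]
      rw [hxi, hpV, hpp]
    · rw [if_neg (by simp [hlli])]
      have h0 : p * (xs i : E.CL K t) = 0 := by
        rw [hpdef, sub_mul, hVx i, hqx i e tl hlli, sub_self]
      rw [h0, zero_mul]
  set kv : K := ∑ i ∈ Finset.univ.filter (fun i => ll i = []), c i with hkv
  have hzpkv : z * p = kv • p := by
    have h1 : p * (z * E.clvtx K t v) * p = z * p := by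
      rw [← mul_assoc, hzp, mul_assoc, hVp, mul_assoc, hpp]
    have h2 : p * (z * E.clvtx K t v) * p = ∑ i, c i • (p * (xs i : E.CL K t) * p) := by
      rw [← hw1, ← hsum, Finset.mul_sum, Finset.sum_mul]
      simp only [mul_smul_comm, smul_mul_assoc]
    rw [← h1, h2]
    calc ∑ i, c i • (p * (xs i : E.CL K t) * p)
        = ∑ i, if ll i = [] then c i • p else 0 := by
          refine Finset.sum_congr rfl fun i _ => ?_
          rw [hpxp i]
          by_cases h : ll i = []
          · rw [if_pos h, if_pos h]
          · rw [if_neg h, if_neg h, smul_zero]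
      _ = ∑ i ∈ Finset.univ.filter (fun i => ll i = []), c i • p := (Finset.sum_filter _ _).symm
      _ = kv • p := by rw [hkv, Finset.sum_smul]
  -- key decomposition
  have hVpq : E.clvtx K t v = p + q := by rw [hpdef, sub_add_cancel]
  have hA : z * (E.clPath K t u l * E.clPathStar K t u l)
      = E.clPath K t u l * (z * E.clvtx K t v) * E.clPathStar K t u l := by
    conv_lhs => rw [← vtx_mul_clPathStar_self hp]
    rw [← mul_assoc, ← hzc _ (clPath_mem u l)]
    simp only [mul_assoc]
  -- the term μe(μe)*
  have hterm : ∀ e : E.Edge,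
      E.clPath K t u l * (E.cledg K t e * E.clghost K t e) * E.clPathStar K t u l
        = E.clPath K t u (l ++ [e]) * E.clPathStar K t u (l ++ [e]) := by
    intro e
    rw [clPath_append_edge, clPathStar_append_edge]
    simp only [mul_assoc]
  -- each z·(μe)(μe)* is symmetric, by the induction hypothesis
  have hIH : ∀ e ∈ Ev,
      z * (E.clPath K t u (l ++ [e]) * E.clPathStar K t u (l ++ [e])) ∈ E.clSymmSpan K t := by
    intro e he
    have hn1 : n - 1 < n := Nat.sub_lt (hEv_pos e he) one_pos
    have hpe : E.IsPathFrom u (E.r e) (l ++ [e]) := isPathFrom_append_edge hp (hEv_src e he)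
    refine IH (n-1) hn1 u (E.r e) (l ++ [e]) hpe ?_
    have hpeel : ∀ i, E.clghost K t e * (xs i : E.CL K t) * E.cledg K t e
        ∈ Submodule.span K (Dset K E t (n-1)) := by
      intro i
      rcases hlli : ll i with _ | ⟨e', tl⟩
      · have hmmi : mm i = [] := by
          rw [← List.length_eq_zero_iff, ← hlen i, hlli]; rfl
        have hxi : (xs i : E.CL K t) = E.clvtx K t v := by
          rw [hx i, hlli, hmmi, clPath_nil, clPathStar_nil, vv_eq]
        have hgv : E.clghost K t e * E.clvtx K t v = E.clghost K t e := by
          rw [← hEv_src e he]; exact gv_eq e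
        rw [hxi, hgv, ge_eq]
        exact Submodule.subset_span ⟨E.r e, E.r e, E.r e, [], [], rfl, rfl, rfl, Nat.zero_le _,
          by rw [clPath_nil, clPathStar_nil, vv_eq]⟩
      · rcases hmmi : mm i with _ | ⟨f', tm⟩
        · exfalso
          have := hlen i; rw [hlli, hmmi] at this; simp at this
        · have h1i := hl i; rw [hlli] at h1i
          have h2i := hm i; rw [hmmi] at h2i
          have hre : E.clghost K t e * (xs i : E.CL K t) * E.cledg K t e
              = (E.clghost K t e * E.clPath K t v (e' :: tl))
                * (E.clPathStar K t v (f' :: tm) * E.cledg K t e) := by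
            rw [hx i, hlli, hmmi]; simp only [mul_assoc]
          rw [hre]
          by_cases hee : e = e'
          · subst hee
            rw [ghost_mul_clPath_cons_eq h1i.1]
            by_cases hfe : f' = e
            · rw [hfe] at h2i
              rw [hfe, clPathStar_cons_mul_edg_eq h2i.1]
              refine Submodule.subset_span ⟨E.r e, E.r e, vv i, tl, tm, h1i.2, h2i.2, ?_, ?_, rfl⟩
              · have := hlen i; rw [hlli, hmmi] at this
                simpa using this
              · have := hlle i; rw [hlli] at this
                exact Nat.le_sub_one_of_lt (by simpa using this)
            · rw [clPathStar_cons_mul_edg_ne h2i.1 hfe, mul_zero]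
              exact Submodule.zero_mem _
          · rw [ghost_mul_clPath_cons_ne h1i.1 hee, zero_mul]
            exact Submodule.zero_mem _
    have hrw : E.clPathStar K t u (l ++ [e]) * z * E.clPath K t u (l ++ [e])
        = ∑ i, c i • (E.clghost K t e * (xs i : E.CL K t) * E.cledg K t e) := by
      calc E.clPathStar K t u (l ++ [e]) * z * E.clPath K t u (l ++ [e])
          = E.clghost K t e * (E.clPathStar K t u l * z * E.clPath K t u l)
            * E.cledg K t e := by
            rw [clPath_append_edge, clPathStar_append_edge]; simp only [mul_assoc]
        _ = ∑ i, c i • (E.clghost K t e * (xs i : E.CL K t) * E.cledg K t e) := by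
            rw [← hsum, Finset.mul_sum, Finset.sum_mul]
            simp only [mul_smul_comm, smul_mul_assoc]
    rw [hrw]
    exact sum_mem fun i _ => Submodule.smul_mem _ _ (hpeel i)
  -- assemble
  rw [hA, hVpq, mul_add, hzpkv, mul_add, add_mul]
  refine Submodule.add_mem _ ?_ ?_
  · -- kv • (μ p μ*) part
    rw [mul_smul_comm, smul_mul_assoc]
    refine Submodule.smul_mem _ _ ?_
    have hsplit : E.clPath K t u l * p * E.clPathStar K t u l
        = E.clPath K t u l * E.clPathStar K t u l
          - ∑ e ∈ Ev, E.clPath K t u (l ++ [e]) * E.clPathStar K t u (l ++ [e]) := by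
      rw [hpdef, mul_sub, sub_mul, clPath_mul_vtx_self hp]
      congr 1
      rw [hqdef, Finset.mul_sum, Finset.sum_mul]
      exact Finset.sum_congr rfl fun e _ => hterm e
    rw [hsplit]
    refine Submodule.sub_mem _ (Submodule.subset_span ⟨u, v, l, hp, rfl⟩)
      (sum_mem fun e he => Submodule.subset_span ⟨u, E.r e, l ++ [e],
        isPathFrom_append_edge hp (hEv_src e he), rfl⟩)
  · -- Σ z (μe)(μe)* part
    have hsplit2 : E.clPath K t u l * (z * q) * E.clPathStar K t u l
        = ∑ e ∈ Ev, z * (E.clPath K t u (l ++ [e]) * E.clPathStar K t u (l ++ [e])) := by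
      rw [hqdef, Finset.mul_sum, Finset.mul_sum, Finset.sum_mul]
      refine Finset.sum_congr rfl fun e _ => ?_
      rw [← hterm e, ← mul_assoc, hzc _ (clPath_mem u l)]
      simp only [mul_assoc]
    rw [hsplit2]
    exact sum_mem fun e he => hIH e he
private theorem stmt16_aux (z : E.CL K t) (hz : z ∈ E.clCenter K t)
    (h0 : z ∈ E.clDeg0 K t) : z ∈ E.clSymmSpan K t := by
  have hzc : ∀ a ∈ E.clSub K t, a * z = z * a := hz.2
  have h0' : z ∈ Submodule.span K {x : E.CL K t | ∃ (u w v : E.V) (l m : List E.Edge),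
      E.IsPathFrom u v l ∧ E.IsPathFrom w v m ∧ l.length = m.length ∧
      x = E.clPath K t u l * E.clPathStar K t w m} := h0
  obtain ⟨k, c, xs, hsum⟩ := Submodule.mem_span_set'.mp h0'
  have hxs : ∀ i, ∃ (u w v : E.V) (l m : List E.Edge),
      E.IsPathFrom u v l ∧ E.IsPathFrom w v m ∧ l.length = m.length ∧
      (xs i : E.CL K t) = E.clPath K t u l * E.clPathStar K t w m := fun i => (xs i).2
  choose uu ww vv ll mm h1 h2 h3 hx using hxs
  obtain ⟨N, hNle⟩ : ∃ N : ℕ, ∀ i, (ll i).length ≤ N :=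
    ⟨Finset.univ.sup fun i => (ll i).length, fun i => Finset.le_sup (f := fun j => (ll j).length) (Finset.mem_univ i)⟩
  have hzspan : ∀ u : E.V, z * E.clvtx K t u ∈ Submodule.span K (Dset K E t N) := by
    intro u
    rw [← hsum, Finset.sum_mul]
    refine sum_mem fun i _ => ?_
    rw [smul_mul_assoc]
    refine Submodule.smul_mem _ _ ?_
    rw [hx i]
    by_cases h : ww i = u
    · subst h
      rw [mul_assoc, clPathStar_mul_vtx_self]
      exact Submodule.subset_span ⟨uu i, ww i, vv i, ll i, mm i, h1 i, h2 i, h3 i,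
        hNle i, rfl⟩
    · rw [mul_assoc, clPathStar_mul_vtx_ne h, mul_zero]
      exact Submodule.zero_mem _
  have hmain : ∀ u : E.V, z * E.clvtx K t u ∈ E.clSymmSpan K t := by
    intro u
    have hvzv : E.clPathStar K t u [] * z * E.clPath K t u [] = z * E.clvtx K t u := by
      rw [clPath_nil, clPathStar_nil, hzc _ (vtx_mem u), mul_assoc, vv_eq]
    have := mainLemma z hz N u u [] rfl (by rw [hvzv]; exact hzspan u)
    rwa [clPath_nil, clPathStar_nil, vv_eq] at this
  set F : Finset E.V := Finset.univ.image ww with hF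
  have hterm : ∀ i, ∑ u ∈ F, ((xs i : E.CL K t) * E.clvtx K t u) = (xs i : E.CL K t) := by
    intro i
    have hmem : ww i ∈ F := Finset.mem_image_of_mem ww (Finset.mem_univ i)
    rw [Finset.sum_eq_single (ww i)]
    · rw [hx i, mul_assoc, clPathStar_mul_vtx_self]
    · intro b _ hb
      rw [hx i, mul_assoc, clPathStar_mul_vtx_ne (Ne.symm hb), mul_zero]
    · intro h; exact absurd hmem h
  have hzF : z = ∑ u ∈ F, z * E.clvtx K t u := by
    calc z = ∑ i, c i • (xs i : E.CL K t) := hsum.symm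
      _ = ∑ i, c i • (∑ u ∈ F, (xs i : E.CL K t) * E.clvtx K t u) := by
          refine Finset.sum_congr rfl fun i _ => ?_
          rw [hterm i]
      _ = ∑ u ∈ F, ∑ i, c i • ((xs i : E.CL K t) * E.clvtx K t u) := by
          simp only [Finset.smul_sum]
          exact Finset.sum_comm
      _ = ∑ u ∈ F, z * E.clvtx K t u := by
          refine Finset.sum_congr rfl fun u _ => ?_
          simp only [← smul_mul_assoc]
          rw [← Finset.sum_mul, hsum]
  rw [hzF]
  exact sum_mem fun u _ => hmain u

end Stmt16Aux

/-- Every degree-zero element of the center of `C_K(E)` (`t = false`) or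
`L_K(E)` (`t = true`) is symmetric: it is a `K`-linear combination of elements `μμ*`
with `μ` a path in `E`. -/
theorem stmt16 (K : Type) [Field K] (E : DirGraph) (t : Bool)
    (z : E.CL K t) (hz : z ∈ E.clCenter K t) (h0 : z ∈ E.clDeg0 K t) :
    z ∈ E.clSymmSpan K t := by
  exact stmt16_aux z hz h0
end
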